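/- arXiv:math/0009232 — 10 statements merged into one kernel-verified Lean document; each statement's English description precedes it below -/
import Mathlib

section
/- Koenigs–Poincaré theorem: if λ ∈ ℂ* with |λ| ≠ 1, then every germ of holomorphic diffeomorphism f of (ℂ,0) with f'(0)=λ is holomorphically linearizable, i.e. there exists a convergent power series h tangent to the identity with f∘h = h∘R_λ where R_λ(z)=λz. -/
/-!
For `0 < ‖λ‖ < 1` choose `c` with `‖λ‖ < c` and `c² < ‖λ‖`. Near `0` the germ `f` contracts by
the factor `c` and `f z - λ z = O(z²)`, so the increments of Koenigs' approximants `f^[n] / λⁿ`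
are `O((c² / ‖λ‖)ⁿ)` uniformly on a small disc. Their uniform limit `φ` is holomorphic, tangent
to the identity and satisfies `φ ∘ f = λ φ`, so the local inverse of `φ` linearizes `f`.
For `‖λ‖ > 1` the same construction applied to the local inverse of `f` (multiplier `λ⁻¹`) gives
`φ ∘ f⁻¹ = λ⁻¹ φ`, that is, again `φ ∘ f = λ φ`.
-/

open Filter Function Metric Set Asymptotics
open scoped Topology

section LocalInverse

variable {𝕜 : Type*} [NontriviallyNormedField 𝕜] [CompleteSpace 𝕜] [CharZero 𝕜] {f : 𝕜 → 𝕜}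
  {x : 𝕜}

theorem AnalyticAt.exists_localInverse (hf : AnalyticAt 𝕜 f x) (hf' : deriv f x ≠ 0) :
    ∃ g : 𝕜 → 𝕜, AnalyticAt 𝕜 g (f x) ∧ g (f x) = x ∧ deriv g (f x) = (deriv f x)⁻¹ ∧
      (∀ᶠ y in 𝓝 (f x), f (g y) = y) ∧ ∀ᶠ y in 𝓝 x, g (f y) = y :=
  ⟨_, hf.analyticAt_localInverse hf', HasStrictFDerivAt.localInverse_apply_image _,
    (hf.hasStrictDerivAt.to_localInverse hf').hasDerivAt.deriv,
    hf.hasStrictDerivAt.eventually_right_inverse hf',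
    hf.hasStrictDerivAt.eventually_left_inverse hf'⟩

end LocalInverse

theorem AnalyticAt.isBigO_sub_sub_deriv_mul {𝕜 : Type*} [NontriviallyNormedField 𝕜]
    {f : 𝕜 → 𝕜} {x : 𝕜} (hf : AnalyticAt 𝕜 f x) :
    (fun y => f (x + y) - f x - deriv f x * y) =O[𝓝 0] fun y => y ^ 2 := by
  obtain ⟨p, hp⟩ := hf
  have hderiv : deriv f x = p.coeff 1 := hp.hasStrictDerivAt.hasDerivAt.deriv
  have hvalue : p.coeff 0 = f x := hp.coeff_zero 1
  refine isBigO_norm_right.1 ?_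
  simpa [FormalMultilinearSeries.partialSum, Finset.sum_range_succ, hvalue, hderiv, sub_sub,
    mul_comm] using hp.isBigO_sub_partialSum_pow 2

theorem norm_iterate_le_pow_mul {E : Type*} [SeminormedAddGroup E] {f : E → E} {s : Set E}
    {c : ℝ} (hs : MapsTo f s s) (hf : ∀ z ∈ s, ‖f z‖ ≤ c * ‖z‖) (hc : 0 ≤ c) (n : ℕ) {z : E}
    (hz : z ∈ s) : ‖f^[n] z‖ ≤ c ^ n * ‖z‖ := by
  induction n with
  | zero => simp
  | succ n ih =>
    rw [iterate_succ_apply', pow_succ', mul_assoc]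
    exact (hf _ (hs.iterate n hz)).trans (mul_le_mul_of_nonneg_left ih hc)

theorem exists_tendstoUniformlyOn_of_norm_sub_le {α E : Type*} [NormedAddCommGroup E]
    [CompleteSpace E] {u : ℕ → α → E} {s : Set α} {a : ℕ → ℝ} (ha : Summable a)
    (h : ∀ n, ∀ x ∈ s, ‖u (n + 1) x - u n x‖ ≤ a n) :
    ∃ g, TendstoUniformlyOn u g atTop s := by
  refine ⟨fun x => u 0 x + ∑' n, (u (n + 1) x - u n x), ?_⟩
  rw [Metric.tendstoUniformlyOn_iff]
  intro ε hε
  filter_upwards [Metric.tendstoUniformlyOn_iff.1 (tendstoUniformlyOn_tsum_nat ha h) ε hε]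
    with N hN x hx
  have := hN x hx
  rw [Finset.sum_range_sub (u · x)] at this
  rw [dist_eq_norm]
  rwa [dist_eq_norm, sub_sub_eq_add_sub, add_comm (∑' n, _)] at this

section Koenigs

variable {𝕜 : Type*}

def koenigsApprox [DivisionRing 𝕜] (f : 𝕜 → 𝕜) (lam : 𝕜) (n : ℕ) (z : 𝕜) : 𝕜 :=
  f^[n] z / lam ^ n

section NormedField

variable [NormedField 𝕜] {f : 𝕜 → 𝕜} {lam : 𝕜}

theorem koenigsApprox_map (hlam : lam ≠ 0) (n : ℕ) (z : 𝕜) :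
    koenigsApprox f lam n (f z) = lam * koenigsApprox f lam (n + 1) z := by
  rw [koenigsApprox, koenigsApprox, ← iterate_succ_apply, pow_succ']
  field_simp

theorem koenigsApprox_succ_sub (hlam : lam ≠ 0) (n : ℕ) (z : 𝕜) :
    koenigsApprox f lam (n + 1) z - koenigsApprox f lam n z =
      (f (f^[n] z) - lam * f^[n] z) / lam ^ (n + 1) := by
  rw [koenigsApprox, koenigsApprox, iterate_succ_apply', pow_succ']
  field_simp

theorem norm_koenigsApprox_succ_sub_le {s : Set 𝕜} {M c r : ℝ} (hs : MapsTo f s s)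
    (hquad : ∀ z ∈ s, ‖f z - lam * z‖ ≤ M * ‖z‖ ^ 2) (hcontr : ∀ z ∈ s, ‖f z‖ ≤ c * ‖z‖)
    (hr : ∀ z ∈ s, ‖z‖ ≤ r) (hM : 0 ≤ M) (hc : 0 ≤ c) (hlam : c ^ 2 < ‖lam‖) (n : ℕ) {z : 𝕜}
    (hz : z ∈ s) :
    ‖koenigsApprox f lam (n + 1) z - koenigsApprox f lam n z‖ ≤
      M * r ^ 2 / ‖lam‖ * (c ^ 2 / ‖lam‖) ^ n := by
  have hlam0 : 0 < ‖lam‖ := (sq_nonneg c).trans_lt hlam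
  have hiter : ‖f^[n] z‖ ≤ c ^ n * r :=
    (norm_iterate_le_pow_mul hs hcontr hc n hz).trans
      (mul_le_mul_of_nonneg_left (hr z hz) (pow_nonneg hc n))
  rw [koenigsApprox_succ_sub (norm_pos_iff.1 hlam0), norm_div, norm_pow]
  calc ‖f (f^[n] z) - lam * f^[n] z‖ / ‖lam‖ ^ (n + 1)
      ≤ M * (c ^ n * r) ^ 2 / ‖lam‖ ^ (n + 1) := by
        gcongr
        exact (hquad _ (hs.iterate n hz)).trans (by gcongr)
    _ = M * r ^ 2 / ‖lam‖ * (c ^ 2 / ‖lam‖) ^ n := by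
        rw [div_pow, ← pow_mul, mul_pow, ← pow_mul]
        field_simp
        ring

theorem exists_tendstoUniformlyOn_koenigsApprox [CompleteSpace 𝕜] {s : Set 𝕜} {M c r : ℝ}
    (hs : MapsTo f s s) (hquad : ∀ z ∈ s, ‖f z - lam * z‖ ≤ M * ‖z‖ ^ 2)
    (hcontr : ∀ z ∈ s, ‖f z‖ ≤ c * ‖z‖) (hr : ∀ z ∈ s, ‖z‖ ≤ r) (hM : 0 ≤ M) (hc : 0 ≤ c)
    (hlam : c ^ 2 < ‖lam‖) :
    ∃ g, TendstoUniformlyOn (koenigsApprox f lam) g atTop s := by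
  have hratio : c ^ 2 / ‖lam‖ < 1 := (div_lt_one ((sq_nonneg c).trans_lt hlam)).2 hlam
  exact exists_tendstoUniformlyOn_of_norm_sub_le
    ((summable_geometric_of_lt_one (by positivity) hratio).mul_left _)
    fun n _ hz => norm_koenigsApprox_succ_sub_le hs hquad hcontr hr hM hc hlam n hz

theorem map_eq_mul_of_tendsto_koenigsApprox {g : 𝕜 → 𝕜} (hlam : lam ≠ 0) {z : 𝕜}
    (hz : Tendsto (koenigsApprox f lam · z) atTop (𝓝 (g z)))
    (hfz : Tendsto (koenigsApprox f lam · (f z)) atTop (𝓝 (g (f z)))) :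
    g (f z) = lam * g z := by
  refine tendsto_nhds_unique hfz ?_
  simpa only [koenigsApprox_map hlam, comp_def] using (hz.comp (tendsto_add_atTop_nat 1)).const_mul lam

end NormedField

theorem hasDerivAt_koenigsApprox [NontriviallyNormedField 𝕜] {f : 𝕜 → 𝕜} {lam x : 𝕜}
    (hf : HasDerivAt f lam x) (hfx : f x = x) (hlam : lam ≠ 0) (n : ℕ) :
    HasDerivAt (koenigsApprox f lam n) 1 x := by
  unfold koenigsApprox
  simpa [hlam] using (HasDerivAt.iterate x hf hfx n).div_const (lam ^ n)

end Koenigs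

theorem AnalyticAt.exists_ball_koenigs_estimates {𝕜 : Type*} [NontriviallyNormedField 𝕜]
    [CompleteSpace 𝕜] {f : 𝕜 → 𝕜} {lam : 𝕜} {c : ℝ} (hf : AnalyticAt 𝕜 f 0) (hf0 : f 0 = 0)
    (hf1 : deriv f 0 = lam) (hlc : ‖lam‖ < c) (hc1 : c ≤ 1) :
    ∃ M ≥ 0, ∃ r > 0, MapsTo f (ball 0 r) (ball 0 r) ∧ (∀ z ∈ ball 0 r, AnalyticAt 𝕜 f z) ∧
      (∀ z ∈ ball 0 r, ‖f z - lam * z‖ ≤ M * ‖z‖ ^ 2) ∧ ∀ z ∈ ball 0 r, ‖f z‖ ≤ c * ‖z‖ := by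
  have htaylor : (fun z => f z - lam * z) =O[𝓝 0] fun z => z ^ 2 := by
    simpa [hf0, hf1] using hf.isBigO_sub_sub_deriv_mul
  obtain ⟨M, hM, hquad⟩ := htaylor.exists_nonneg
  have hlin := (htaylor.trans_isLittleO (isLittleO_pow_id one_lt_two)).bound (sub_pos.2 hlc)
  obtain ⟨r, hr, hball⟩ := Metric.eventually_nhds_iff_ball.1
    (hquad.bound.and (hlin.and hf.eventually_analyticAt))
  have hcontr : ∀ z ∈ ball (0 : 𝕜) r, ‖f z‖ ≤ c * ‖z‖ := fun z hz => by
    calc ‖f z‖ ≤ ‖lam * z‖ + ‖f z - lam * z‖ := norm_le_insert' _ _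
      _ ≤ ‖lam‖ * ‖z‖ + (c - ‖lam‖) * ‖z‖ := by rw [norm_mul]; gcongr; exact (hball z hz).2.1
      _ = c * ‖z‖ := by ring
  refine ⟨M, hM, r, hr, fun z hz => ?_, fun z hz => (hball z hz).2.2,
    fun z hz => by simpa using (hball z hz).1, hcontr⟩
  rw [mem_ball_zero_iff] at hz ⊢
  calc ‖f z‖ ≤ c * ‖z‖ := hcontr z (mem_ball_zero_iff.2 hz)
    _ ≤ ‖z‖ := mul_le_of_le_one_left (norm_nonneg z) hc1
    _ < r := hz

theorem exists_koenigs_coordinate_of_norm_lt_one {lam : ℂ} (h0 : lam ≠ 0) (hlt : ‖lam‖ < 1)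
    {f : ℂ → ℂ} (hf : AnalyticAt ℂ f 0) (hf0 : f 0 = 0) (hf1 : deriv f 0 = lam) :
    ∃ g : ℂ → ℂ, AnalyticAt ℂ g 0 ∧ g 0 = 0 ∧ deriv g 0 = 1 ∧
      ∀ᶠ z in 𝓝 0, g (f z) = lam * g z := by
  have hlam0 : 0 < ‖lam‖ := norm_pos_iff.2 h0
  obtain ⟨c, hlc, hcs⟩ : ∃ c, ‖lam‖ < c ∧ c < √‖lam‖ :=
    exists_between (Real.lt_sqrt_of_sq_lt (by nlinarith))
  have hc0 : 0 ≤ c := hlam0.le.trans hlc.le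
  have hc2 : c ^ 2 < ‖lam‖ := (Real.lt_sqrt hc0).1 hcs
  obtain ⟨M, hM, r, hr, hmaps, hfan, hquad, hcontr⟩ :=
    hf.exists_ball_koenigs_estimates hf0 hf1 hlc (by nlinarith)
  obtain ⟨g, hg⟩ := exists_tendstoUniformlyOn_koenigsApprox hmaps hquad hcontr
    (fun z hz => (mem_ball_zero_iff.1 hz).le) hM hc0 hc2
  have hdiff (n : ℕ) : DifferentiableOn ℂ (koenigsApprox f lam n) (ball 0 r) :=
    (DifferentiableOn.iterate (fun z hz => (hfan z hz).differentiableWithinAt) hmaps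
      n).div_const _
  have hloc := hg.tendstoLocallyUniformlyOn
  have h0r : (0 : ℂ) ∈ ball 0 r := mem_ball_self hr
  refine ⟨g, (hloc.differentiableOn (.of_forall hdiff) isOpen_ball).analyticAt
    (isOpen_ball.mem_nhds h0r), ?_, ?_, ?_⟩
  · exact tendsto_nhds_unique (hg.tendsto_at h0r) (by simp [koenigsApprox, iterate_fixed hf0])
  · have hderiv (n : ℕ) : deriv (koenigsApprox f lam n) 0 = 1 :=
      (hasDerivAt_koenigsApprox (hf1 ▸ hf.differentiableAt.hasDerivAt) hf0 h0 n).deriv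
    exact tendsto_nhds_unique ((hloc.deriv (.of_forall hdiff) isOpen_ball).tendsto_at h0r)
      (by simp [hderiv])
  · filter_upwards [isOpen_ball.mem_nhds h0r] with z hz
    exact map_eq_mul_of_tendsto_koenigsApprox h0 (hg.tendsto_at hz) (hg.tendsto_at (hmaps hz))

theorem exists_koenigs_coordinate {lam : ℂ} (h0 : lam ≠ 0) (h1 : ‖lam‖ ≠ 1) {f : ℂ → ℂ}
    (hf : AnalyticAt ℂ f 0) (hf0 : f 0 = 0) (hf1 : deriv f 0 = lam) :
    ∃ g : ℂ → ℂ, AnalyticAt ℂ g 0 ∧ g 0 = 0 ∧ deriv g 0 = 1 ∧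
      ∀ᶠ z in 𝓝 0, g (f z) = lam * g z := by
  rcases h1.lt_or_gt with hlt | hgt
  · exact exists_koenigs_coordinate_of_norm_lt_one h0 hlt hf hf0 hf1
  obtain ⟨F, hF, hF0, hF1, -, hFf⟩ := hf.exists_localInverse (hf1 ▸ h0)
  rw [hf0] at hF hF0 hF1
  obtain ⟨g, hg, hg0, hg1, hgF⟩ := exists_koenigs_coordinate_of_norm_lt_one (inv_ne_zero h0)
    (by rwa [norm_inv, inv_lt_one₀ (norm_pos_iff.2 h0)]) hF hF0 (by rw [hF1, hf1])
  refine ⟨g, hg, hg0, hg1, ?_⟩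
  have hf_tendsto : Tendsto f (𝓝 0) (𝓝 0) := by simpa [hf0] using hf.continuousAt.tendsto
  filter_upwards [hf_tendsto.eventually hgF, hFf] with w hw hFw
  rw [hFw] at hw
  rw [hw, mul_inv_cancel_left₀ h0]

theorem exists_linearization_of_koenigs_coordinate {𝕜 : Type*} [NontriviallyNormedField 𝕜]
    [CompleteSpace 𝕜] [CharZero 𝕜] {f g : 𝕜 → 𝕜} {lam : 𝕜} (hf : ContinuousAt f 0)
    (hf0 : f 0 = 0) (hg : AnalyticAt 𝕜 g 0) (hg0 : g 0 = 0) (hg1 : deriv g 0 = 1)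
    (hgf : ∀ᶠ z in 𝓝 0, g (f z) = lam * g z) :
    ∃ h : 𝕜 → 𝕜, AnalyticAt 𝕜 h 0 ∧ h 0 = 0 ∧ deriv h 0 = 1 ∧
      ∀ᶠ z in 𝓝 0, f (h z) = h (lam * z) := by
  obtain ⟨h, hh, hh0, hh1, hgh, hhg⟩ := hg.exists_localInverse (by simp [hg1])
  rw [hg0] at hh hh0 hh1 hgh
  refine ⟨h, hh, hh0, by rw [hh1, hg1, inv_one], ?_⟩
  have hh_tendsto : Tendsto h (𝓝 0) (𝓝 0) := by simpa [hh0] using hh.continuousAt.tendsto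
  have hfh_tendsto : Tendsto (fun z => f (h z)) (𝓝 0) (𝓝 0) := by
    simpa [hf0, comp_def] using hf.tendsto.comp hh_tendsto
  filter_upwards [hh_tendsto.eventually hgf, hgh, hfh_tendsto.eventually hhg] with z hz hghz hhgz
  rw [← hhgz, hz, hghz]

/-- Koenigs–Poincaré theorem: if `|λ| ≠ 1`, `λ ≠ 0`, then every germ of holomorphic
diffeomorphism of `(ℂ,0)` with linear part `λ` is holomorphically linearizable. -/
theorem stmt3 (lam : ℂ) (h0 : lam ≠ 0) (h1 : ‖lam‖ ≠ 1)
    (f : ℂ → ℂ) (hf : AnalyticAt ℂ f 0) (hf0 : f 0 = 0) (hf1 : deriv f 0 = lam) :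
    ∃ h : ℂ → ℂ, AnalyticAt ℂ h 0 ∧ h 0 = 0 ∧ deriv h 0 = 1 ∧
      ∀ᶠ z in nhds (0 : ℂ), f (h z) = h (lam * z) := by
  obtain ⟨g, hg, hg0, hg1, hgf⟩ := exists_koenigs_coordinate h0 h1 hf hf0 hf1
  exact exists_linearization_of_koenigs_coordinate hf.continuousAt hf0 hg hg0 hg1 hgf
end

section
/- Cremer's theorem: if α ∈ ℝ∖ℚ satisfies limsup_{n→∞} |{nα}|^{-1/n} = +∞ (where {x} denotes the fractional part), then there exists a germ of a holomorphic diffeomorphism f of (ℂ,0) with f'(0) = e^{2πiα} which is not linearizable; indeed there exists f whose formal linearization has coefficients ĥ_n satisfying limsup_n |ĥ_n|^{1/n} = +∞. -/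
/-!
The Taylor coefficients `c n` of `f` are chosen one at a time. Conjugating `f` to the rotation
`z ↦ λ z` forces the coefficients `ĥ n` of the linearization to satisfy
`(λ ^ n - λ) ĥ n = c n + R n`, where `R n` only involves `c j` and `ĥ j` for `j < n`. Taking
for `c n` the unit complex number in the direction of `R n` gives `‖c n + R n‖ ≥ 1`, hence
`‖ĥ (m + 1)‖ ≥ ‖λ ^ m - 1‖⁻¹ ≥ (2π {mα})⁻¹`, and the Cremer condition makes `‖ĥ n‖ ^ (1 / n)`
unbounded. Since `‖c n‖ ≤ 1`, `f` is holomorphic near `0`. The Taylor coefficients of a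
holomorphic linearization would satisfy the same recursion, hence equal `ĥ`, contradicting
their positive radius of convergence.
-/

open Finset Filter

noncomputable section

namespace Cremer

section RealRoots

lemma lt_rpow_one_div_iff {M b : ℝ} {n : ℕ} (hn : n ≠ 0) (hM : 0 ≤ M) (hb : 0 ≤ b) :
    M < b ^ (1 / (n : ℝ)) ↔ M ^ n < b := by
  rw [one_div, Real.lt_rpow_inv_iff_of_pos hM hb (by positivity), Real.rpow_natCast]

lemma lt_rpow_neg_one_div_iff {C s : ℝ} {n : ℕ} (hn : n ≠ 0) (hC : 0 < C) (hs : 0 < s) :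
    C < s ^ (-1 / (n : ℝ)) ↔ C ^ n * s < 1 := by
  rw [neg_div, Real.rpow_neg hs.le, ← Real.inv_rpow hs.le,
    lt_rpow_one_div_iff hn hC.le (inv_nonneg.mpr hs.le), inv_eq_one_div, lt_div_iff₀ hs]

lemma frequently_lt_rpow_of_frequently_pow_lt {b : ℕ → ℝ} (hb : ∀ n, 0 ≤ b n)
    (h : ∀ M, 1 ≤ M → ∃ᶠ n in atTop, M ^ n < b n) (M : ℝ) :
    ∃ᶠ n in atTop, M < b n ^ (1 / (n : ℝ)) :=
  ((h _ (le_max_right M 1)).and_eventually (eventually_ne_atTop 0)).mono fun n ⟨hlt, hn⟩ =>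
    (le_max_left M 1).trans_lt ((lt_rpow_one_div_iff hn (by positivity) (hb n)).mpr hlt)

end RealRoots

section CompositionSum

variable {R : Type*} [CommSemiring R]

def compositionSum (x : ℕ → R) (j n : ℕ) : R :=
  ∑ t ∈ (Nat.antidiagonalTuple j n).filter (fun t => ∀ i, 0 < t i), ∏ i, x (t i)

lemma lt_of_sum_eq_of_pos {j n : ℕ} (hj : 2 ≤ j) {t : Fin j → ℕ}
    (ht : ∑ i, t i = n) (hpos : ∀ i, 0 < t i) (i : Fin j) : t i < n := by
  obtain ⟨i', hi'⟩ : ∃ i' : Fin j, i' ≠ i := by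
    rcases eq_or_ne i ⟨0, by omega⟩ with rfl | hne
    · exact ⟨⟨1, by omega⟩, by simp [Fin.ext_iff]⟩
    · exact ⟨⟨0, by omega⟩, hne.symm⟩
  exact ht ▸ single_lt_sum hi' (mem_univ i) (mem_univ i') (hpos i') fun k _ _ => Nat.zero_le _

lemma compositionSum_congr {x y : ℕ → R} {j n : ℕ} (hj : 2 ≤ j)
    (hxy : ∀ m < n, x m = y m) : compositionSum x j n = compositionSum y j n := by
  refine sum_congr rfl fun t ht => ?_
  rw [mem_filter, Nat.mem_antidiagonalTuple] at ht
  exact prod_congr rfl fun i _ => hxy _ (lt_of_sum_eq_of_pos hj ht.1 ht.2 i)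

lemma compositionSum_one (x : ℕ → R) {n : ℕ} (hn : 0 < n) : compositionSum x 1 n = x n := by
  rw [compositionSum, Nat.antidiagonalTuple_one, filter_singleton,
    if_pos fun _ => by simpa using hn]
  simp

lemma compositionSum_self (x : ℕ → R) (n : ℕ) : compositionSum x n n = x 1 ^ n := by
  have hones : (Nat.antidiagonalTuple n n).filter (fun t => ∀ i, 0 < t i) = {fun _ => 1} := by
    ext t
    simp only [mem_filter, Nat.mem_antidiagonalTuple, mem_singleton]
    constructor
    · rintro ⟨hsum, hpos⟩
      funext i
      by_contra hne
      have : ∑ _k : Fin n, 1 < ∑ k, t k :=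
        sum_lt_sum (fun k _ => hpos k) ⟨i, mem_univ i, by have := hpos i; omega⟩
      simp [hsum] at this
    · rintro rfl
      simp
  simp [compositionSum, hones]

lemma sum_Icc_mul_compositionSum (c x : ℕ → R) {n : ℕ} (hn : 2 ≤ n) :
    ∑ j ∈ Icc 1 n, c j * compositionSum x j n =
      c 1 * x n + (c n * x 1 ^ n + ∑ j ∈ Ioo 1 n, c j * compositionSum x j n) := by
  have hsplit : Icc 1 n = insert 1 (insert n (Ioo 1 n)) := by
    ext; simp only [mem_Icc, mem_insert, mem_Ioo]; omega
  rw [hsplit, sum_insert (by simp; omega), sum_insert (by simp),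
    compositionSum_one x (by omega), compositionSum_self]

end CompositionSum

section Composition

variable {𝕜 : Type*} [NontriviallyNormedField 𝕜]

def compositionOfTuple (n : ℕ) (s : Σ j : ℕ, Fin j → ℕ)
    (hs : ∑ i, s.2 i = n) (hpos : ∀ i, 0 < s.2 i) : Composition n where
  blocks := List.ofFn s.2
  blocks_pos hi := by
    obtain ⟨k, rfl⟩ := List.mem_ofFn.mp hi
    exact hpos k
  blocks_sum := by rw [List.sum_ofFn, hs]

lemma coeff_comp (p q : FormalMultilinearSeries 𝕜 𝕜 𝕜) {n : ℕ} (hn : 0 < n) :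
    (p.comp q).coeff n = ∑ j ∈ Icc 1 n, p.coeff j * compositionSum q.coeff j n := by
  have hcomp : (p.comp q).coeff n =
      ∑ c : Composition n, p.coeff c.length * ∏ i, q.coeff (c.blocksFun i) := by
    simp only [FormalMultilinearSeries.coeff, FormalMultilinearSeries.comp,
      _root_.sum_apply, FormalMultilinearSeries.compAlongComposition_apply]
    refine sum_congr rfl fun c _ => ?_
    rw [show q.applyComposition c 1 = fun i => q.coeff (c.blocksFun i) from rfl,
      FormalMultilinearSeries.apply_eq_prod_smul_coeff, smul_eq_mul, mul_comm]
    rfl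
  simp only [hcomp, compositionSum, mul_sum]
  rw [sum_sigma']
  refine sum_bij' (fun c _ => (⟨c.length, c.blocksFun⟩ : Σ j : ℕ, Fin j → ℕ))
    (fun s hs => compositionOfTuple n s
      (Nat.mem_antidiagonalTuple.mp (mem_filter.mp (mem_sigma.mp hs).2).1)
      (mem_filter.mp (mem_sigma.mp hs).2).2) ?_ (fun _ _ => mem_univ _) ?_ ?_ (fun _ _ => rfl)
  · intro c _
    simp only [mem_sigma, mem_Icc, mem_filter, Nat.mem_antidiagonalTuple]
    exact ⟨⟨c.length_pos_of_pos hn, c.length_le⟩, c.sum_blocksFun, c.one_le_blocksFun⟩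
  · intro c _
    apply Composition.ext
    simp [compositionOfTuple, Composition.blocksFun]
  · intro s _
    refine Sigma.ext (by simp [compositionOfTuple, Composition.length]) ?_
    rw [Fin.heq_fun_iff (by simp [compositionOfTuple, Composition.length])]
    intro i
    simp only [compositionOfTuple, Composition.blocksFun]
    exact List.get_ofFn _ _

end Composition

section Uniqueness

variable {K : Type*} [CommRing K] [IsDomain K]

theorem eq_of_linearization_recursion {lam : K} {c x y : ℕ → K}
    (hlam : ∀ n, 2 ≤ n → lam ^ n ≠ lam) (hc : c 1 = lam) (h0 : x 0 = y 0) (h1 : x 1 = y 1)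
    (hx : ∀ n, 1 ≤ n → lam ^ n * x n = ∑ j ∈ Icc 1 n, c j * compositionSum x j n)
    (hy : ∀ n, 1 ≤ n → lam ^ n * y n = ∑ j ∈ Icc 1 n, c j * compositionSum y j n) :
    x = y := by
  funext n
  induction n using Nat.strong_induction_on with
  | _ n ih =>
    rcases lt_or_ge n 2 with hn | hn
    · interval_cases n <;> assumption
    have hlower : ∑ j ∈ Ioo 1 n, c j * compositionSum x j n =
        ∑ j ∈ Ioo 1 n, c j * compositionSum y j n :=
      sum_congr rfl fun j hj => by rw [compositionSum_congr (mem_Ioo.mp hj).1 ih]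
    have hxn := hx n (by omega)
    have hyn := hy n (by omega)
    rw [sum_Icc_mul_compositionSum c _ hn, hc, h1] at hxn
    rw [sum_Icc_mul_compositionSum c _ hn, hc] at hyn
    have hfactor : (lam ^ n - lam) * (x n - y n) = 0 := by
      linear_combination hxn - hyn + hlower
    exact sub_eq_zero.mp
      ((mul_eq_zero.mp hfactor).resolve_left (sub_ne_zero.mpr (hlam n hn)))

end Uniqueness

section Analytic

open Topology

variable {𝕜 : Type*} [NontriviallyNormedField 𝕜]

theorem linearization_recursion_of_conj {f g : 𝕜 → 𝕜} {p q : FormalMultilinearSeries 𝕜 𝕜 𝕜}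
    {lam : 𝕜} (hf : HasFPowerSeriesAt f p 0) (hg : HasFPowerSeriesAt g q 0) (hg0 : g 0 = 0)
    (hconj : ∀ᶠ z in 𝓝 0, f (g z) = g (lam * z)) {n : ℕ} (hn : 1 ≤ n) :
    lam ^ n * q.coeff n = ∑ j ∈ Icc 1 n, p.coeff j * compositionSum q.coeff j n := by
  have hfg : HasFPowerSeriesAt (f ∘ g) (p.comp q) 0 := (hg0 ▸ hf).comp hg
  have hg_lam : HasFPowerSeriesAt (fun z => g (lam * z))
      (q.compContinuousLinearMap (lam • ContinuousLinearMap.id 𝕜 𝕜)) 0 :=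
    HasFPowerSeriesAt.compContinuousLinearMap (u := lam • ContinuousLinearMap.id 𝕜 𝕜)
      (by simpa using hg)
  rw [← coeff_comp p q hn, hfg.eq_formalMultilinearSeries_of_eventually hg_lam hconj]
  show _ = q n (fun _ => lam • (1 : 𝕜))
  simp only [FormalMultilinearSeries.apply_eq_pow_smul_coeff, smul_eq_mul, mul_one]

theorem radius_eq_zero_of_frequently_lt {E F : Type*} [NormedAddCommGroup E] [NormedSpace 𝕜 E]
    [NormedAddCommGroup F] [NormedSpace 𝕜 F] {q : FormalMultilinearSeries 𝕜 E F}
    (hq : ∀ M : ℝ, ∃ᶠ n in atTop, M < ‖q n‖ ^ (1 / (n : ℝ))) : q.radius = 0 := by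
  by_contra hrad
  obtain ⟨r, hr_pos, hr⟩ := ENNReal.lt_iff_exists_nnreal_btwn.mp (pos_iff_ne_zero.mpr hrad)
  have hr0 : (0 : ℝ) < r := by exact_mod_cast hr_pos
  obtain ⟨C, -, hC⟩ := q.norm_mul_pow_le_of_lt_radius hr
  obtain ⟨n, hlt, hn⟩ := ((hq (max C 1 / r)).and_eventually (eventually_ge_atTop 1)).exists
  rw [lt_rpow_one_div_iff (by omega) (by positivity) (norm_nonneg _)] at hlt
  have hle : ‖q n‖ ≤ (max C 1 / r) ^ n := by
    rw [div_pow, le_div_iff₀ (by positivity)]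
    exact (hC n).trans ((le_max_left C 1).trans (le_self_pow₀ (le_max_right C 1) (by omega)))
  exact (not_lt_of_ge hle) hlt

theorem not_linearizable_of_frequently_lt {f : 𝕜 → 𝕜} {p : FormalMultilinearSeries 𝕜 𝕜 𝕜}
    {lam : 𝕜} {h : ℕ → 𝕜} (hf : HasFPowerSeriesAt f p 0) (hlam : ∀ n, 2 ≤ n → lam ^ n ≠ lam)
    (hp : p.coeff 1 = lam) (h0 : h 0 = 0) (h1 : h 1 = 1)
    (hrec : ∀ n, 1 ≤ n → lam ^ n * h n = ∑ j ∈ Icc 1 n, p.coeff j * compositionSum h j n)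
    (hgrowth : ∀ M : ℝ, ∃ᶠ n in atTop, M < ‖h n‖ ^ (1 / (n : ℝ))) :
    ¬ ∃ g : 𝕜 → 𝕜, AnalyticAt 𝕜 g 0 ∧ g 0 = 0 ∧ deriv g 0 = 1 ∧
      ∀ᶠ z in 𝓝 0, f (g z) = g (lam * z) := by
  rintro ⟨g, ⟨q, hq⟩, hg0, hg1, hconj⟩
  have hqh : q.coeff = h :=
    eq_of_linearization_recursion hlam hp ((hq.coeff_zero 1).trans (hg0.trans h0.symm))
      (hq.deriv.symm.trans (hg1.trans h1.symm))
      (fun n hn => linearization_recursion_of_conj hf hq hg0 hconj hn) hrec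
  refine hq.radius_pos.ne' (radius_eq_zero_of_frequently_lt ?_)
  simpa only [FormalMultilinearSeries.norm_apply_eq_norm_coef, hqh] using hgrowth

end Analytic

section Construction

open Complex

def unitAlong (z : ℂ) : ℂ := exp (z.arg * I)

lemma norm_unitAlong (z : ℂ) : ‖unitAlong z‖ = 1 := norm_exp_ofReal_mul_I _

lemma norm_add_unitAlong (z : ℂ) : ‖z + unitAlong z‖ = ‖z‖ + 1 := by
  have hz : z + unitAlong z = ((‖z‖ + 1 : ℝ) : ℂ) * unitAlong z := by
    nth_rw 1 [← norm_mul_exp_arg_mul_I z]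
    push_cast [unitAlong]
    ring
  rw [hz, norm_mul, norm_unitAlong, norm_real, Real.norm_of_nonneg (by positivity), mul_one]

def remainder (c h : ℕ → ℂ) (n : ℕ) : ℂ := ∑ j ∈ Ioo 1 n, c j * compositionSum h j n

lemma remainder_congr {c c' h h' : ℕ → ℂ} {n : ℕ} (hc : ∀ m < n, c m = c' m)
    (hh : ∀ m < n, h m = h' m) : remainder c h n = remainder c' h' n :=
  sum_congr rfl fun j hj => by
    rw [hc j (mem_Ioo.mp hj).2, compositionSum_congr (mem_Ioo.mp hj).1 hh]

def cremerStep (lam : ℂ) (n : ℕ) (prev : ℕ → ℂ × ℂ) : ℂ × ℂ :=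
  if n = 0 then (0, 0)
  else if n = 1 then (lam, 1)
  else
    let R := remainder (fun m => (prev m).1) (fun m => (prev m).2) n
    (unitAlong R, (R + unitAlong R) / (lam ^ n - lam))

lemma cremerStep_congr (lam : ℂ) {n : ℕ} {prev prev' : ℕ → ℂ × ℂ}
    (h : ∀ m < n, prev m = prev' m) : cremerStep lam n prev = cremerStep lam n prev' := by
  have hR := remainder_congr (n := n) (fun m hm => congrArg Prod.fst (h m hm))
    (fun m hm => congrArg Prod.snd (h m hm))
  simp only [cremerStep, hR]

-- The pairs `(c n, ĥ n)` are built jointly; masking the values at `m ≥ n` only serves to make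
-- the recursion well founded.
def cremerSeq (lam : ℂ) (n : ℕ) : ℂ × ℂ :=
  cremerStep lam n fun m => if m < n then cremerSeq lam m else 0
termination_by n

lemma cremerSeq_eq (lam : ℂ) (n : ℕ) : cremerSeq lam n = cremerStep lam n (cremerSeq lam) := by
  rw [cremerSeq]
  exact cremerStep_congr lam fun m hm => if_pos hm

def cremerCoeff (lam : ℂ) (n : ℕ) : ℂ := (cremerSeq lam n).1

def formalLin (lam : ℂ) (n : ℕ) : ℂ := (cremerSeq lam n).2

lemma cremerCoeff_zero (lam : ℂ) : cremerCoeff lam 0 = 0 := by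
  simp [cremerCoeff, cremerSeq_eq, cremerStep]

lemma cremerCoeff_one (lam : ℂ) : cremerCoeff lam 1 = lam := by
  simp [cremerCoeff, cremerSeq_eq, cremerStep]

lemma formalLin_zero (lam : ℂ) : formalLin lam 0 = 0 := by
  simp [formalLin, cremerSeq_eq, cremerStep]

lemma formalLin_one (lam : ℂ) : formalLin lam 1 = 1 := by
  simp [formalLin, cremerSeq_eq, cremerStep]

lemma cremerSeq_of_two_le (lam : ℂ) {n : ℕ} (hn : 2 ≤ n) :
    cremerSeq lam n = (unitAlong (remainder (cremerCoeff lam) (formalLin lam) n),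
      (remainder (cremerCoeff lam) (formalLin lam) n +
        unitAlong (remainder (cremerCoeff lam) (formalLin lam) n)) / (lam ^ n - lam)) := by
  rw [cremerSeq_eq, cremerStep, if_neg (by omega), if_neg (by omega)]
  rfl

lemma cremerCoeff_of_two_le (lam : ℂ) {n : ℕ} (hn : 2 ≤ n) :
    cremerCoeff lam n = unitAlong (remainder (cremerCoeff lam) (formalLin lam) n) := by
  rw [cremerCoeff, cremerSeq_of_two_le lam hn]

lemma formalLin_of_two_le (lam : ℂ) {n : ℕ} (hn : 2 ≤ n) :
    formalLin lam n =
      (remainder (cremerCoeff lam) (formalLin lam) n + cremerCoeff lam n) / (lam ^ n - lam) := by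
  rw [formalLin, cremerSeq_of_two_le lam hn, cremerCoeff_of_two_le lam hn]

lemma norm_cremerCoeff_le (lam : ℂ) (hlam : ‖lam‖ = 1) (n : ℕ) : ‖cremerCoeff lam n‖ ≤ 1 := by
  rcases lt_or_ge n 2 with hn | hn
  · interval_cases n <;> simp [cremerCoeff_zero, cremerCoeff_one, hlam]
  · rw [cremerCoeff_of_two_le lam hn, norm_unitAlong]

lemma formalLin_recursion (lam : ℂ) (hlam : ∀ n, 2 ≤ n → lam ^ n ≠ lam) {n : ℕ} (hn : 1 ≤ n) :
    lam ^ n * formalLin lam n =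
      ∑ j ∈ Icc 1 n, cremerCoeff lam j * compositionSum (formalLin lam) j n := by
  rcases hn.eq_or_lt with rfl | hn
  · simp [compositionSum_one, cremerCoeff_one]
  rw [sum_Icc_mul_compositionSum _ _ hn, cremerCoeff_one, formalLin_one, one_pow, mul_one,
    ← remainder, formalLin_of_two_le lam hn]
  field_simp [sub_ne_zero.mpr (hlam n hn)]
  ring

lemma inv_norm_le_norm_formalLin (lam : ℂ) {n : ℕ} (hn : 2 ≤ n) :
    ‖lam ^ n - lam‖⁻¹ ≤ ‖formalLin lam n‖ := by
  rw [formalLin_of_two_le lam hn, cremerCoeff_of_two_le lam hn, norm_div, norm_add_unitAlong,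
    inv_eq_one_div]
  exact div_le_div_of_nonneg_right (le_add_of_nonneg_left (norm_nonneg _)) (norm_nonneg _)

end Construction

section Rotation

open Complex Real

lemma exp_two_pi_I_mul_pow (x : ℝ) (m : ℕ) :
    exp (2 * π * I * x) ^ m = exp (2 * π * I * ((m * x : ℝ) : ℂ)) := by
  rw [← Complex.exp_nat_mul]
  push_cast
  ring_nf

lemma norm_exp_two_pi_I_mul_sub_one_le (x : ℝ) :
    ‖exp (2 * π * I * x) - 1‖ ≤ 2 * π * Int.fract x := by
  have hx : exp (2 * π * I * x) = exp (I * ((2 * π * Int.fract x : ℝ) : ℂ)) := by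
    conv_lhs => rw [← Int.floor_add_fract x]
    rw [show 2 * π * I * ((⌊x⌋ + Int.fract x : ℝ) : ℂ) =
        ⌊x⌋ * (2 * π * I) + I * ((2 * π * Int.fract x : ℝ) : ℂ) by push_cast; ring,
      Complex.exp_add, exp_int_mul_two_pi_mul_I, one_mul]
  rw [hx]
  refine norm_exp_I_mul_ofReal_sub_one_le.trans_eq (Real.norm_of_nonneg ?_)
  have := Int.fract_nonneg x
  positivity

lemma exp_two_pi_I_mul_pow_ne_one {α : ℝ} (hα : Irrational α) {m : ℕ} (hm : m ≠ 0) :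
    exp (2 * π * I * α) ^ m ≠ 1 := by
  rw [exp_two_pi_I_mul_pow, Ne, Complex.exp_eq_one_iff]
  rintro ⟨k, hk⟩
  have hmk : ((m * α : ℝ) : ℂ) = (k : ℝ) := by
    apply mul_left_cancel₀ two_pi_I_ne_zero
    push_cast at hk ⊢
    linear_combination hk
  exact (hα.natCast_mul hm).ne_int k (by exact_mod_cast hmk)

lemma exp_two_pi_I_mul_pow_ne_self {α : ℝ} (hα : Irrational α) {m : ℕ} (hm : 2 ≤ m) :
    exp (2 * π * I * α) ^ m ≠ exp (2 * π * I * α) := by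
  intro h
  apply exp_two_pi_I_mul_pow_ne_one hα (m := m - 1) (by omega)
  apply mul_right_cancel₀ (Complex.exp_ne_zero (2 * π * I * α))
  rw [← pow_succ, Nat.sub_add_cancel (by omega), h, one_mul]

end Rotation

section Growth

open Complex Real

lemma norm_exp_two_pi_I_mul (x : ℝ) : ‖exp (2 * π * I * x)‖ = 1 := by
  rw [show 2 * π * I * x = ((2 * π * x : ℝ) : ℂ) * I by push_cast; ring]
  exact norm_exp_ofReal_mul_I _

lemma inv_le_norm_formalLin_succ {α : ℝ} (hα : Irrational α) {m : ℕ} (hm : m ≠ 0) :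
    (2 * π * Int.fract (m * α))⁻¹ ≤ ‖formalLin (exp (2 * π * I * α)) (m + 1)‖ := by
  set lam := exp (2 * π * I * α)
  have hnorm : ‖lam ^ (m + 1) - lam‖ = ‖lam ^ m - 1‖ := by
    rw [show lam ^ (m + 1) - lam = (lam ^ m - 1) * lam by ring, norm_mul,
      norm_exp_two_pi_I_mul, mul_one]
  calc (2 * π * Int.fract (m * α))⁻¹ ≤ ‖lam ^ m - 1‖⁻¹ :=
        inv_anti₀ (norm_pos_iff.mpr (sub_ne_zero.mpr (exp_two_pi_I_mul_pow_ne_one hα hm)))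
          (by rw [exp_two_pi_I_mul_pow]; exact norm_exp_two_pi_I_mul_sub_one_le _)
    _ = ‖lam ^ (m + 1) - lam‖⁻¹ := by rw [hnorm]
    _ ≤ ‖formalLin lam (m + 1)‖ := inv_norm_le_norm_formalLin lam (by omega)

lemma frequently_pow_lt_norm_formalLin {α : ℝ} (hα : Irrational α)
    (hcremer : ∀ C : ℝ, ∃ᶠ n : ℕ in atTop, C < Int.fract ((n : ℝ) * α) ^ (-(1 : ℝ) / (n : ℝ)))
    {M : ℝ} (hM : 1 ≤ M) : ∃ᶠ n in atTop, M ^ n < ‖formalLin (exp (2 * π * I * α)) n‖ := by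
  refine (tendsto_add_atTop_nat 1).frequently
    (((hcremer (2 * π * M ^ 2)).and_eventually (eventually_ne_atTop 0)).mono ?_)
  rintro m ⟨hCm, hm⟩
  have hs : 0 < Int.fract (m * α) :=
    Int.fract_pos.mpr ((hα.natCast_mul hm).ne_int _)
  rw [lt_rpow_neg_one_div_iff hm (by positivity) hs] at hCm
  refine lt_of_lt_of_le ?_ (inv_le_norm_formalLin_succ hα hm)
  rw [inv_eq_one_div, lt_div_iff₀ (by positivity)]
  have hpi : 1 ≤ 2 * π := by linarith [pi_gt_three]
  calc M ^ (m + 1) * (2 * π * Int.fract (m * α))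
      = M ^ (m + 1) * (2 * π) * Int.fract (m * α) := by ring
    _ ≤ (2 * π * M ^ 2) ^ m * Int.fract (m * α) := by
      gcongr
      calc M ^ (m + 1) * (2 * π) ≤ M ^ (2 * m) * (2 * π) ^ m :=
            mul_le_mul (pow_le_pow_right₀ hM (by omega)) (le_self_pow₀ hpi hm) (by positivity)
              (by positivity)
        _ = (2 * π * M ^ 2) ^ m := by ring
    _ < 1 := hCm

end Growth

end Cremer

end

open Cremer

/-- Cremer's theorem: if `limsup |{nα}|^{-1/n} = +∞`, there is a germ with linear part
`e^{2πiα}` which is not linearizable; indeed its formal linearization `h` (given by the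
usual recursion) has coefficients with `limsup ‖h_n‖^{1/n} = +∞`. -/
theorem stmt4 (α : ℝ) (hα : Irrational α)
    (hcremer : ∀ C : ℝ, ∃ᶠ n : ℕ in atTop,
      C < Int.fract ((n : ℝ) * α) ^ (-(1 : ℝ) / (n : ℝ))) :
    ∃ (f : ℂ → ℂ) (p : FormalMultilinearSeries ℂ ℂ ℂ) (h : ℕ → ℂ),
      HasFPowerSeriesAt f p 0 ∧ f 0 = 0 ∧
      deriv f 0 = Complex.exp (2 * Real.pi * Complex.I * α) ∧
      (¬ ∃ g : ℂ → ℂ, AnalyticAt ℂ g 0 ∧ g 0 = 0 ∧ deriv g 0 = 1 ∧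
          ∀ᶠ z in nhds (0 : ℂ),
            f (g z) = g (Complex.exp (2 * Real.pi * Complex.I * α) * z)) ∧
      h 0 = 0 ∧ h 1 = 1 ∧
      (∀ n : ℕ, 1 ≤ n →
        Complex.exp (2 * Real.pi * Complex.I * α) ^ n * h n =
          ∑ j ∈ Finset.Icc 1 n, p.coeff j *
            ∑ t ∈ (Finset.Nat.antidiagonalTuple j n).filter (fun t => ∀ i, 0 < t i),
              ∏ i, h (t i)) ∧
      (∀ M : ℝ, ∃ᶠ n : ℕ in atTop, M < ‖h n‖ ^ ((1 : ℝ) / (n : ℝ))) := by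
  set lam := Complex.exp (2 * Real.pi * Complex.I * α)
  have hlam : ∀ n, 2 ≤ n → lam ^ n ≠ lam := fun _ => exp_two_pi_I_mul_pow_ne_self hα
  set p := FormalMultilinearSeries.ofScalars ℂ (cremerCoeff lam)
  have hradius : (1 : ENNReal) ≤ p.radius := by
    simpa using p.le_radius_of_bound 1 (r := 1) fun n => by
      simpa [p] using norm_cremerCoeff_le lam (norm_exp_two_pi_I_mul α) n
  have hp : HasFPowerSeriesAt p.sum p 0 :=
    (p.hasFPowerSeriesOnBall (zero_lt_one.trans_le hradius)).hasFPowerSeriesAt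
  have hp1 : p.coeff 1 = lam := by simp [p, cremerCoeff_one]
  have hrec : ∀ n, 1 ≤ n → lam ^ n * formalLin lam n =
      ∑ j ∈ Icc 1 n, p.coeff j * compositionSum (formalLin lam) j n := by
    simpa only [p, FormalMultilinearSeries.coeff_ofScalars] using
      fun n => formalLin_recursion lam hlam (n := n)
  have hgrowth := frequently_lt_rpow_of_frequently_pow_lt (fun _ => norm_nonneg _)
    fun _ hM => frequently_pow_lt_norm_formalLin hα hcremer hM
  refine ⟨p.sum, p, formalLin lam, hp, ?_, hp.deriv.trans hp1,
    not_linearizable_of_frequently_lt hp hlam hp1 (formalLin_zero lam) (formalLin_one lam) hrec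
      hgrowth, formalLin_zero lam, formalLin_one lam, hrec, hgrowth⟩
  rw [← hp.coeff_zero 1]
  simp [p, cremerCoeff_zero]
end

section
/- The set of irrational numbers α satisfying limsup_{n→∞} |{nα}|^{-1/n} = +∞ (the Cremer condition) is a dense G_δ subset of ℝ of Lebesgue measure zero. -/
open Filter

/-- The set of irrational numbers satisfying Cremer's condition
`limsup |{nα}|^{-1/n} = +∞`. -/
def cremerSet : Set ℝ :=
  {α : ℝ | Irrational α ∧ ∀ C : ℝ, ∃ᶠ n : ℕ in atTop,
      C < Int.fract ((n : ℝ) * α) ^ (-(1 : ℝ) / (n : ℝ))}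

/-!
Cremer's condition says that for every `m`, `0 < {nα} < (m + 1)⁻ⁿ` for infinitely many `n`.
For fixed `m` this is the `limsup` of the open sets `{α | 0 < {nα} < (m + 1)⁻ⁿ}`; every interval
of length `> 1/n` meets the `n`-th one, so each tail union is open and dense and the `limsup` is
a dense `Gδ` by Baire. Intersecting countably many of these with the irrationals gives the
first two claims. For the measure, take `m = 3`: then `|α - ⌊nα⌋/n| < 4⁻ⁿ/n ≤ n⁻³` infinitely
often, so `α` is Liouville with exponent `3`, which almost no real number is.
-/

open Set MeasureTheory

section Frequently

variable {X : Type*}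

lemma setOf_frequently_mem_eq_iInter_iUnion (s : ℕ → Set X) :
    {x | ∃ᶠ n in atTop, x ∈ s n} = ⋂ N, ⋃ n ≥ N, s n := by
  ext x
  simp [frequently_atTop]

variable [TopologicalSpace X] {s : ℕ → Set X}

lemma isGδ_setOf_frequently_mem (hs : ∀ n, IsOpen (s n)) :
    IsGδ {x | ∃ᶠ n in atTop, x ∈ s n} := by
  rw [setOf_frequently_mem_eq_iInter_iUnion]
  exact .iInter_of_isOpen fun N => isOpen_biUnion fun n _ => hs n

lemma setOf_frequently_mem_mem_residual [BaireSpace X] (hs : ∀ n, IsOpen (s n))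
    (hd : ∀ N, Dense (⋃ n ≥ N, s n)) : {x | ∃ᶠ n in atTop, x ∈ s n} ∈ residual X := by
  refine residual_of_dense_Gδ (isGδ_setOf_frequently_mem hs) ?_
  rw [setOf_frequently_mem_eq_iInter_iUnion]
  exact dense_iInter_of_isOpen (fun N => isOpen_biUnion fun n _ => hs n) hd

end Frequently

lemma isOpen_setOf_fract_mem_Ioo (ε : ℝ) : IsOpen {x : ℝ | Int.fract x ∈ Ioo 0 ε} := by
  refine isOpen_iff_mem_nhds.2 fun x hx => ?_
  exact (continuousAt_fract (Int.fract_pos.1 hx.1)).preimage_mem_nhds (Ioo_mem_nhds hx.1 hx.2)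

lemma exists_dist_lt_fract_mul_mem_Ioo {n : ℕ} (hn : n ≠ 0) {ε : ℝ} (hε : 0 < ε) (x : ℝ) :
    ∃ α, dist α x < 1 / n ∧ Int.fract (n * α) ∈ Ioo 0 ε := by
  have hn' : (0 : ℝ) < n := by positivity
  obtain ⟨η, hη, hηmin⟩ := exists_between (lt_min hε one_half_pos)
  obtain ⟨hηε, hη'⟩ := lt_min_iff.1 hηmin
  have hmul : (n : ℝ) * ((⌊n * x⌋ + η) / n) = ⌊n * x⌋ + η := by field_simp
  refine ⟨(⌊n * x⌋ + η) / n, ?_, ?_⟩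
  · have h1 := Int.floor_le ((n : ℝ) * x)
    have h2 := Int.lt_floor_add_one ((n : ℝ) * x)
    rw [Real.dist_eq, lt_div_iff₀ hn', ← abs_of_pos hn', ← abs_mul, abs_of_pos hn', sub_mul,
      div_mul_cancel₀ _ hn'.ne', abs_lt]
    constructor <;> nlinarith
  · rw [hmul, Int.fract_intCast_add, Int.fract_eq_self.2 ⟨hη.le, by linarith⟩]
    exact ⟨hη, hηε⟩

def smallFractSet (δ : ℕ → ℝ) : Set ℝ :=
  {α | ∃ᶠ n : ℕ in atTop, Int.fract (n * α) ∈ Ioo 0 (δ n)}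

lemma smallFractSet_mem_residual {δ : ℕ → ℝ} (hδ : ∀ n, 0 < δ n) :
    smallFractSet δ ∈ residual ℝ := by
  have hopen (n : ℕ) : IsOpen {α : ℝ | Int.fract (n * α) ∈ Ioo 0 (δ n)} :=
    (isOpen_setOf_fract_mem_Ioo (δ n)).preimage (continuous_const_mul _)
  refine setOf_frequently_mem_mem_residual hopen fun N => Metric.dense_iff.2 fun x r hr => ?_
  obtain ⟨n, hnr, hnN⟩ := ((tendsto_one_div_atTop_nhds_zero_nat.eventually (gt_mem_nhds hr)).and
    (eventually_ge_atTop (max N 1))).exists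
  obtain ⟨α, hαx, hα⟩ := exists_dist_lt_fract_mul_mem_Ioo (n := n) (by omega) (hδ n) x
  exact ⟨α, hαx.trans hnr, mem_biUnion (le_of_max_le_left hnN) hα⟩

lemma isGδ_smallFractSet (δ : ℕ → ℝ) : IsGδ (smallFractSet δ) :=
  isGδ_setOf_frequently_mem fun n =>
    (isOpen_setOf_fract_mem_Ioo (δ n)).preimage (continuous_const_mul _)

lemma liouvilleWith_of_mem_smallFractSet {δ : ℕ → ℝ} {p C α : ℝ}
    (hδ : ∀ᶠ n : ℕ in atTop, δ n ≤ C / n ^ p) (hα : α ∈ smallFractSet δ) :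
    LiouvilleWith (p + 1) α := by
  refine ⟨C, ((hα.and_eventually hδ).and_eventually (eventually_ne_atTop 0)).mono ?_⟩
  rintro n ⟨⟨⟨h0, hlt⟩, hδn⟩, hn⟩
  have hn' : (0 : ℝ) < n := by positivity
  have hdiff : α - ⌊n * α⌋ / n = Int.fract (n * α) / n := by
    rw [Int.fract, sub_div, mul_div_cancel_left₀ _ hn'.ne']
  refine ⟨⌊n * α⌋, fun h => ?_, ?_⟩
  · rw [← sub_eq_zero, hdiff] at h
    exact (div_pos h0 hn').ne' h
  · rw [hdiff, abs_of_pos (div_pos h0 hn'), Real.rpow_add_one hn'.ne', ← div_div]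
    gcongr
    exact hlt.trans_le hδn

lemma volume_smallFractSet_eq_zero {δ : ℕ → ℝ} {p C : ℝ} (hp : 1 < p)
    (hδ : ∀ᶠ n : ℕ in atTop, δ n ≤ C / n ^ p) : volume (smallFractSet δ) = 0 :=
  have hnull : volume {x | LiouvilleWith (p + 1) x} = 0 := by
    simpa only [not_not] using
      ae_iff.1 (ae_not_liouvilleWith.mono fun _ h => h (p + 1) (by linarith))
  measure_mono_null (fun _ => liouvilleWith_of_mem_smallFractSet hδ) hnull

lemma lt_rpow_neg_one_div_iff {x C : ℝ} (hx : 0 ≤ x) (hC : 0 < C) {n : ℕ} (hn : n ≠ 0) :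
    C < x ^ (-(1 : ℝ) / n) ↔ x ∈ Ioo 0 (C ^ n)⁻¹ := by
  have hn' : (0 : ℝ) < n := by positivity
  rcases hx.eq_or_lt with rfl | hx
  · -- `0 ^ y = 0` for `y ≠ 0`, so `{nα} = 0` never meets the condition.
    rw [Real.zero_rpow (by simp [hn])]
    simp [hC.le]
  · rw [neg_div, one_div, ← inv_neg, Real.lt_rpow_inv_iff_of_neg hC hx (neg_neg_of_pos hn'),
      Real.rpow_neg hC.le, Real.rpow_natCast]
    simp [hx]

lemma forall_frequently_lt_rpow_iff {f : ℕ → ℝ} (hf : ∀ n, 0 ≤ f n) :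
    (∀ C : ℝ, ∃ᶠ n : ℕ in atTop, C < f n ^ (-(1 : ℝ) / n)) ↔
      ∀ m : ℕ, ∃ᶠ n : ℕ in atTop, f n ∈ Ioo 0 (((m : ℝ) + 1) ^ n)⁻¹ := by
  have key (C : ℝ) (hC : 0 < C) : (∃ᶠ n : ℕ in atTop, C < f n ^ (-(1 : ℝ) / n)) ↔
      ∃ᶠ n : ℕ in atTop, f n ∈ Ioo 0 (C ^ n)⁻¹ :=
    frequently_congr <| (eventually_ne_atTop 0).mono fun n hn =>
      lt_rpow_neg_one_div_iff (hf n) hC hn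
  refine ⟨fun h m => (key _ (by positivity)).1 (h _), fun h C => ?_⟩
  obtain ⟨m, hm⟩ := exists_nat_gt C
  exact ((key _ (by positivity)).2 (h m)).mono fun n hn => (hm.trans (lt_add_one _)).trans hn

lemma cremerSet_eq :
    cremerSet = {α | Irrational α} ∩ ⋂ m : ℕ, smallFractSet fun n => (((m : ℝ) + 1) ^ n)⁻¹ := by
  ext α
  simp only [cremerSet, smallFractSet, mem_inter_iff, mem_iInter, mem_ofPred_eq]
  rw [forall_frequently_lt_rpow_iff fun n => Int.fract_nonneg _]

lemma inv_four_pow_le_one_div_rpow_two {n : ℕ} (hn : n ≠ 0) :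
    ((4 : ℝ) ^ n)⁻¹ ≤ 1 / (n : ℝ) ^ (2 : ℝ) := by
  have h2n : (n : ℝ) < 2 ^ n := by exact_mod_cast n.lt_two_pow_self
  have h4 : (4 : ℝ) ^ n = (2 ^ n) ^ 2 := by rw [← pow_mul, mul_comm, pow_mul]; norm_num
  rw [Real.rpow_two, one_div, h4]
  gcongr

/-- The set of irrationals satisfying Cremer's condition is a dense `Gδ` of Lebesgue
measure zero. -/
theorem stmt6 : IsGδ cremerSet ∧ Dense cremerSet ∧ MeasureTheory.volume cremerSet = 0 := by
  rw [cremerSet_eq]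
  refine ⟨IsGδ.setOfPred_irrational.inter (.iInter fun m => isGδ_smallFractSet _),
    dense_of_mem_residual (inter_mem eventually_residual_irrational
      (countable_iInter_mem.2 fun m => smallFractSet_mem_residual fun n => by positivity)),
    measure_mono_null (inter_subset_right.trans (iInter_subset _ 3))
      (volume_smallFractSet_eq_zero (C := 1) one_lt_two ?_)⟩
  filter_upwards [eventually_ne_atTop 0] with n hn
  convert inv_four_pow_le_one_div_rpow_two hn using 3
  norm_num
end

section
/- The polynomials u_n(λ) = λ^{-n} P_λ^n(1), where P_λ(z)=λ(z−z²/2), satisfy the recurrence u_0(λ)=1, u_{n+1}(λ) = u_n(λ) − (λ^n/2) u_n(λ)², and the uniform bound |u_n(λ)| ≤ 2(1−|λ|)^{-2} for all λ in the open unit disk; consequently u_n converges uniformly on compact subsets of 𝔻 to a bounded holomorphic function u with u(0)=1/2. -/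
/-!
The recurrence is the identity `λⁿ uₙ(λ) = P_λⁿ(1)`, valid for every `λ`. For the bound, `0` is an
attracting fixed point of `P_λ` with multiplier `λ` and `1` is its only critical point. If the
critical orbit never entered the disc `|z| < |λ|⁻¹ - 1`, which `P_λ` maps into itself, then for
every `n` there would be a branch of `P_λ^{-n}` on that disc fixing `0`. These branches are bounded
by `2(|λ|⁻¹ + 1)`, since larger points escape to infinity, yet their derivative at `0` is `λ^{-n}`,
contradicting the Schwarz lemma. Hence `|P_λⁿ(1)| ≤ 2(|λ|⁻¹ + 1)`, and the maximum principle on the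
circles `|λ| = ρ`, `ρ → 1`, gives `|uₙ| ≤ 4` on the disc. The Schwarz lemma applied to
`uₙ - uₙ(0)`, where `uₙ(0) ∈ {1, 1/2}`, then gives `|uₙ(λ)| ≤ 1 + 5|λ| ≤ 2 (1 - |λ|)⁻²`. Finally
`|uₙ₊₁ - uₙ| = |λ|ⁿ |uₙ|² / 2 ≤ 8 |λ|ⁿ`, so `uₙ` converges locally uniformly on the disc.
-/

open Metric Set Filter Topology Complex

theorem tendstoUniformlyOn_of_norm_succ_sub_le {β F : Type*} [NormedAddCommGroup F]
    [CompleteSpace F] {f : ℕ → β → F} {b : ℕ → ℝ} (hb : Summable b) {s : Set β}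
    (h : ∀ n, ∀ x ∈ s, ‖f (n + 1) x - f n x‖ ≤ b n) :
    TendstoUniformlyOn f (fun x => f 0 x + ∑' n, (f (n + 1) x - f n x)) atTop s := by
  have hsum := tendstoUniformlyOn_tsum_nat hb h
  rw [Metric.tendstoUniformlyOn_iff] at hsum ⊢
  intro ε hε
  filter_upwards [hsum ε hε] with N hN x hx
  convert hN x hx using 1
  rw [Finset.sum_range_sub (fun n => f n x), dist_eq_norm, dist_eq_norm]
  congr 1
  abel

theorem Complex.exists_differentiableOn_exp_eq_of_ne_zero {f : ℂ → ℂ} {c : ℂ} {r : ℝ}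
    (hf : DifferentiableOn ℂ f (ball c r)) (hf₀ : ∀ z ∈ ball c r, f z ≠ 0) :
    ∃ g : ℂ → ℂ, DifferentiableOn ℂ g (ball c r) ∧ ∀ z ∈ ball c r, exp (g z) = f z := by
  rcases le_or_gt r 0 with hr | hr
  · exact ⟨0, by simp [ball_eq_empty.2 hr]⟩
  have hc : c ∈ ball c r := mem_ball_self hr
  obtain ⟨g, hgc, hg⟩ := ((hf.deriv isOpen_ball).div hf hf₀).isExactOn_ball.with_val_at c
    (log (f c))
  have hgd : DifferentiableOn ℂ g (ball c r) := fun z hz =>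
    (hg z hz).differentiableAt.differentiableWithinAt
  have hquot : ∀ z ∈ ball c r, HasDerivAt (fun w => exp (g w) / f w) 0 z := by
    intro z hz
    have hfz := (hf.differentiableAt (isOpen_ball.mem_nhds hz)).hasDerivAt
    refine ((hg z hz).cexp.fun_div hfz (hf₀ z hz)).congr_deriv ?_
    simp only [Pi.div_apply]
    field_simp [hf₀ z hz]
    ring
  refine ⟨g, hgd, fun z hz => ?_⟩
  have := isOpen_ball.is_const_of_deriv_eq_zero (convex_ball c r).isPreconnected
    (fun w hw => (hquot w hw).differentiableAt.differentiableWithinAt)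
    (fun w hw => (hquot w hw).deriv) hz hc
  rw [hgc, exp_log (hf₀ c hc), div_self (hf₀ c hc), div_eq_one_iff_eq (hf₀ z hz)] at this
  exact this

theorem Complex.exists_differentiableOn_sq_eq_of_ne_zero {f : ℂ → ℂ} {c : ℂ} {r : ℝ}
    (hf : DifferentiableOn ℂ f (ball c r)) (hf₀ : ∀ z ∈ ball c r, f z ≠ 0) :
    ∃ s : ℂ → ℂ, DifferentiableOn ℂ s (ball c r) ∧ ∀ z ∈ ball c r, s z ^ 2 = f z := by
  obtain ⟨g, hgd, hg⟩ := Complex.exists_differentiableOn_exp_eq_of_ne_zero hf hf₀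
  refine ⟨fun z => exp (g z / 2), (hgd.div_const 2).cexp, fun z hz => ?_⟩
  rw [← exp_nat_mul, ← hg z hz]
  push_cast
  ring_nf

theorem Complex.norm_le_of_forall_norm_eq_le {f : ℂ → ℂ} (hf : DifferentiableOn ℂ f (ball 0 1))
    {B : ℝ → ℝ} {M : ℝ} (hB : Tendsto B (𝓝[<] 1) (𝓝 M))
    (hfB : ∀ ρ ∈ Ioo 0 1, ∀ z, ‖z‖ = ρ → ‖f z‖ ≤ B ρ) {z : ℂ} (hz : ‖z‖ < 1) : ‖f z‖ ≤ M := by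
  refine ge_of_tendsto hB ?_
  filter_upwards [Ioo_mem_nhdsLT hz] with ρ hρ
  have hρ₀ : 0 < ρ := (norm_nonneg z).trans_lt hρ.1
  refine Complex.norm_le_of_forall_mem_frontier_norm_le isBounded_ball
    (hf.diffContOnCl_ball (closedBall_subset_ball hρ.2)) (fun w hw => ?_)
    (subset_closure (mem_ball_zero_iff.2 hρ.1))
  rw [frontier_ball 0 hρ₀.ne', mem_sphere_zero_iff_norm] at hw
  exact hfB ρ ⟨hρ₀, hρ.2⟩ w hw

noncomputable def quadMap (lam z : ℂ) : ℂ := lam * (z - z ^ 2 / 2)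

noncomputable def scaledOrbit : ℕ → ℂ → ℂ
  | 0, _ => 1
  | n + 1, lam => scaledOrbit n lam - lam ^ n / 2 * scaledOrbit n lam ^ 2

theorem pow_mul_scaledOrbit (n : ℕ) (lam : ℂ) :
    lam ^ n * scaledOrbit n lam = (quadMap lam)^[n] 1 := by
  induction n with
  | zero => simp [scaledOrbit]
  | succ n ih =>
    rw [Function.iterate_succ_apply', ← ih, scaledOrbit, quadMap]
    ring

theorem differentiable_scaledOrbit (n : ℕ) : Differentiable ℂ (scaledOrbit n) := by
  induction n with
  | zero => exact differentiable_const 1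
  | succ n ih =>
    change Differentiable ℂ fun lam => scaledOrbit n lam - lam ^ n / 2 * scaledOrbit n lam ^ 2
    fun_prop

theorem scaledOrbit_succ_apply_zero (n : ℕ) : scaledOrbit (n + 1) 0 = 1 / 2 := by
  induction n with
  | zero => norm_num [scaledOrbit]
  | succ n ih => rw [scaledOrbit, ih]; simp

theorem norm_scaledOrbit_apply_zero_le (n : ℕ) : ‖scaledOrbit n 0‖ ≤ 1 := by
  cases n with
  | zero => simp [scaledOrbit]
  | succ n => norm_num [scaledOrbit_succ_apply_zero]

theorem eq_scaledOrbit {u : ℕ → ℂ → ℂ} (hu : ∀ n, Continuous (u n))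
    (hdef : ∀ (n : ℕ) (lam : ℂ), lam ≠ 0 → u n lam = lam ^ (-(n : ℤ)) * (quadMap lam)^[n] 1) :
    u = scaledOrbit := by
  funext n
  refine (hu n).ext_on (dense_compl_singleton 0) (differentiable_scaledOrbit n).continuous
    fun lam (hlam : lam ≠ 0) => ?_
  rw [hdef n lam hlam, ← pow_mul_scaledOrbit, zpow_neg, zpow_natCast,
    inv_mul_cancel_left₀ (pow_ne_zero n hlam)]

section quadMap

variable {lam : ℂ}

theorem norm_quadMap (lam z : ℂ) : ‖quadMap lam z‖ = ‖lam‖ * ‖z‖ * ‖1 - z / 2‖ := by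
  rw [quadMap, ← norm_mul, ← norm_mul]
  ring_nf

theorem mapsTo_quadMap_ball (lam : ℂ) :
    MapsTo (quadMap lam) (ball 0 (‖lam‖⁻¹ - 1)) (ball 0 (‖lam‖⁻¹ - 1)) := by
  intro z hz
  rw [mem_ball_zero_iff] at hz ⊢
  have hr : 0 < ‖lam‖ := by
    by_contra h
    simp only [norm_pos_iff, ne_eq, not_not] at h
    simp [h] at hz
    linarith [norm_nonneg z]
  have hrz : ‖lam‖ * ‖z‖ < 1 - ‖lam‖ := by
    have := mul_lt_mul_of_pos_left hz hr
    rwa [mul_sub, mul_inv_cancel₀ hr.ne', mul_one] at this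
  have h1 : ‖1 - z / 2‖ ≤ 1 + ‖z‖ / 2 := by
    simpa using norm_sub_le (1 : ℂ) (z / 2)
  have h2 : ‖lam‖ * (1 + ‖z‖ / 2) ≤ 1 := by nlinarith [norm_nonneg z]
  rw [norm_quadMap]
  calc ‖lam‖ * ‖z‖ * ‖1 - z / 2‖ ≤ ‖z‖ * (‖lam‖ * (1 + ‖z‖ / 2)) := by
        rw [mul_comm ‖lam‖, mul_assoc]; gcongr
    _ ≤ ‖z‖ := mul_le_of_le_one_right (norm_nonneg z) h2
    _ < ‖lam‖⁻¹ - 1 := hz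

theorem mapsTo_quadMap_escape (hlam : lam ≠ 0) :
    MapsTo (quadMap lam) {z | 2 * (‖lam‖⁻¹ + 1) < ‖z‖} {z | 2 * (‖lam‖⁻¹ + 1) < ‖z‖} := by
  intro z (hz : _ < ‖z‖)
  have hr : 0 < ‖lam‖ := norm_pos_iff.2 hlam
  have h1 : ‖z‖ / 2 - 1 ≤ ‖1 - z / 2‖ := by
    have := norm_sub_norm_le (z / 2) 1
    rw [norm_sub_rev, norm_div] at this
    simpa using this
  have h2 : 1 < ‖lam‖ * (‖z‖ / 2 - 1) := by
    have := mul_lt_mul_of_pos_left hz hr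
    have hexp : ‖lam‖ * (2 * (‖lam‖⁻¹ + 1)) = 2 + 2 * ‖lam‖ := by field_simp
    linarith
  show _ < ‖quadMap lam z‖
  rw [norm_quadMap]
  calc 2 * (‖lam‖⁻¹ + 1) < ‖z‖ := hz
    _ ≤ ‖lam‖ * ‖z‖ * (‖z‖ / 2 - 1) := by nlinarith [norm_nonneg z]
    _ ≤ ‖lam‖ * ‖z‖ * ‖1 - z / 2‖ := by gcongr

theorem hasDerivAt_iterate_quadMap_zero (lam : ℂ) (n : ℕ) :
    HasDerivAt (quadMap lam)^[n] (lam ^ n) 0 := by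
  have h : HasDerivAt (quadMap lam) lam 0 := by
    show HasDerivAt (fun z => lam * (z - z ^ 2 / 2)) lam 0
    have := ((hasDerivAt_id (0 : ℂ)).sub ((hasDerivAt_pow 2 (0 : ℂ)).div_const 2)).const_mul lam
    simpa using this
  exact HasDerivAt.iterate _ h (by simp [quadMap]) n

theorem exists_rightInvOn_iterate_quadMap (hlam : lam ≠ 0) {t : ℝ} (ht : 0 < t)
    (hcrit : ∀ N, (quadMap lam)^[N] 1 ∉ ball 0 t) (n : ℕ) :
    ∃ g : ℂ → ℂ, DifferentiableOn ℂ g (ball 0 t) ∧ g 0 = 0 ∧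
      RightInvOn g (quadMap lam)^[n] (ball 0 t) := by
  induction n with
  | zero => exact ⟨id, differentiableOn_id, rfl, fun z _ => rfl⟩
  | succ n ih =>
    obtain ⟨g, hgd, hg0, hg⟩ := ih
    -- `quadMap lam w = g z` iff `(1 - w) ^ 2 = 1 - 2 g z / lam`, and the right side vanishes only
    -- when `g z` is the critical value `quadMap lam 1 = lam / 2`
    have hne : ∀ z ∈ ball 0 t, 1 - 2 * g z / lam ≠ 0 := by
      intro z hz h
      have hcv : g z = quadMap lam 1 := by
        rw [quadMap]
        field_simp at h
        linear_combination -h / 2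
      refine hcrit (n + 1) ?_
      rwa [Function.iterate_succ_apply, ← hcv, hg hz]
    obtain ⟨s, hsd, hs⟩ := exists_differentiableOn_sq_eq_of_ne_zero
      ((differentiableOn_const 1).sub ((hgd.const_mul 2).div_const lam)) hne
    have hs0 : s 0 ^ 2 = 1 := by simp [hs 0 (mem_ball_self ht), hg0]
    have hs0' : s 0 ≠ 0 := by rintro h; simp [h] at hs0
    refine ⟨fun z => 1 - s z / s 0, (differentiableOn_const 1).sub (hsd.div_const _),
      by simp [hs0'], fun z hz => ?_⟩
    have hsq : lam * (s z / s 0) ^ 2 = lam - 2 * g z := by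
      rw [div_pow, hs z hz, hs0, div_one, Pi.sub_apply]
      field_simp
    have hstep : quadMap lam (1 - s z / s 0) = g z := by
      rw [quadMap]
      linear_combination (-1 / 2 : ℂ) * hsq
    rw [Function.iterate_succ_apply, hstep, hg hz]

theorem exists_iterate_quadMap_one_mem_ball (hlam : lam ≠ 0) (hlam₁ : ‖lam‖ < 1) :
    ∃ N, (quadMap lam)^[N] 1 ∈ ball 0 (‖lam‖⁻¹ - 1) := by
  set t := ‖lam‖⁻¹ - 1
  set R := 2 * (‖lam‖⁻¹ + 1)
  have hr : 0 < ‖lam‖ := norm_pos_iff.2 hlam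
  have ht : 0 < t := sub_pos.2 (one_lt_inv₀ hr |>.2 hlam₁)
  have htR : t ≤ R := by linarith [inv_nonneg.2 hr.le]
  by_contra! hcrit
  obtain ⟨n, hn⟩ := exists_pow_lt_of_lt_one (div_pos ht (ht.trans_le htR)) hlam₁
  obtain ⟨g, hgd, hg0, hg⟩ := exists_rightInvOn_iterate_quadMap hlam ht hcrit n
  -- a value of `g` outside `closedBall 0 R` would escape, so could not land in `ball 0 t`
  have hmaps : MapsTo g (ball 0 t) (closedBall (g 0) R) := by
    intro z hz
    rw [hg0, mem_closedBall_zero_iff]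
    by_contra! hR
    have hesc : R < ‖(quadMap lam)^[n] (g z)‖ := (mapsTo_quadMap_escape hlam).iterate n hR
    rw [hg hz] at hesc
    linarith [mem_ball_zero_iff.1 hz]
  have hg' : HasDerivAt g (deriv g 0) 0 :=
    (hgd.differentiableAt (isOpen_ball.mem_nhds (mem_ball_self ht))).hasDerivAt
  have hchain : lam ^ n * deriv g 0 = 1 := by
    have hcomp := (hasDerivAt_iterate_quadMap_zero lam n).comp_of_eq 0 hg' hg0.symm
    refine hcomp.unique ((hasDerivAt_id 0).congr_of_eventuallyEq ?_)
    filter_upwards [isOpen_ball.mem_nhds (mem_ball_self ht)] with z hz using hg hz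
  have hschwarz : ‖deriv g 0‖ ≤ R / t := Complex.norm_deriv_le_div_of_mapsTo_ball hgd hmaps ht
  have : (1 : ℝ) ≤ ‖lam‖ ^ n * (R / t) := by
    calc (1 : ℝ) = ‖lam‖ ^ n * ‖deriv g 0‖ := by rw [← norm_pow, ← norm_mul, hchain, norm_one]
      _ ≤ ‖lam‖ ^ n * (R / t) := by gcongr
  rw [lt_div_iff₀ (ht.trans_le htR)] at hn
  rw [mul_div_assoc', le_div_iff₀ ht] at this
  linarith

theorem norm_iterate_quadMap_one_le (hlam : lam ≠ 0) (hlam₁ : ‖lam‖ < 1) (n : ℕ) :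
    ‖(quadMap lam)^[n] 1‖ ≤ 2 * (‖lam‖⁻¹ + 1) := by
  obtain ⟨N, hN⟩ := exists_iterate_quadMap_one_mem_ball hlam hlam₁
  by_contra! hn
  have hesc : 2 * (‖lam‖⁻¹ + 1) < ‖(quadMap lam)^[N] ((quadMap lam)^[n] 1)‖ :=
    (mapsTo_quadMap_escape hlam).iterate N hn
  have htrap := (mapsTo_quadMap_ball lam).iterate n hN
  rw [← Function.iterate_add_apply] at hesc htrap
  rw [Nat.add_comm n N] at htrap
  linarith [mem_ball_zero_iff.1 htrap, inv_nonneg.2 (norm_nonneg lam)]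

end quadMap

section scaledOrbit

variable {lam : ℂ}

theorem norm_scaledOrbit_le_of_ne_zero (hlam : lam ≠ 0) (hlam₁ : ‖lam‖ < 1) (n : ℕ) :
    ‖scaledOrbit n lam‖ ≤ 2 * (‖lam‖⁻¹ + 1) / ‖lam‖ ^ n := by
  rw [le_div_iff₀ (pow_pos (norm_pos_iff.2 hlam) n), mul_comm, ← norm_pow, ← norm_mul,
    pow_mul_scaledOrbit]
  exact norm_iterate_quadMap_one_le hlam hlam₁ n

theorem norm_scaledOrbit_le_four (n : ℕ) (hlam : ‖lam‖ < 1) : ‖scaledOrbit n lam‖ ≤ 4 := by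
  refine Complex.norm_le_of_forall_norm_eq_le (differentiable_scaledOrbit n).differentiableOn
    (B := fun ρ => 2 * (ρ⁻¹ + 1) / ρ ^ n) ?_ ?_ hlam
  · have hcont : ContinuousAt (fun ρ : ℝ => 2 * (ρ⁻¹ + 1) / ρ ^ n) 1 := by
      fun_prop (disch := norm_num)
    convert hcont.tendsto.mono_left nhdsWithin_le_nhds using 2
    norm_num
  · rintro ρ ⟨hρ₀, hρ₁⟩ z rfl
    exact norm_scaledOrbit_le_of_ne_zero (norm_pos_iff.1 hρ₀) hρ₁ n

theorem norm_scaledOrbit_sub_apply_zero_le (n : ℕ) (hlam : ‖lam‖ < 1) :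
    ‖scaledOrbit n lam - scaledOrbit n 0‖ ≤ 5 * ‖lam‖ := by
  have hmaps : MapsTo (scaledOrbit n) (ball 0 1) (closedBall (scaledOrbit n 0) 5) := by
    intro z hz
    rw [mem_closedBall, dist_eq_norm]
    linarith [norm_sub_le (scaledOrbit n z) (scaledOrbit n 0),
      norm_scaledOrbit_le_four n (mem_ball_zero_iff.1 hz), norm_scaledOrbit_apply_zero_le n]
  simpa [dist_eq_norm] using Complex.dist_le_div_mul_dist_of_mapsTo_ball
    (differentiable_scaledOrbit n).differentiableOn hmaps (mem_ball_zero_iff.2 hlam)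

theorem norm_scaledOrbit_le (n : ℕ) (hlam : ‖lam‖ < 1) :
    ‖scaledOrbit n lam‖ ≤ 2 / (1 - ‖lam‖) ^ 2 := by
  have h := norm_sub_norm_le (scaledOrbit n lam) (scaledOrbit n 0)
  have h₀ := norm_scaledOrbit_apply_zero_le n
  have h₅ := norm_scaledOrbit_sub_apply_zero_le n hlam
  rw [le_div_iff₀ (by nlinarith [norm_nonneg lam])]
  nlinarith [norm_nonneg lam, mul_nonneg (norm_nonneg lam) (norm_nonneg lam)]

theorem norm_scaledOrbit_succ_sub_le (n : ℕ) (hlam : ‖lam‖ < 1) :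
    ‖scaledOrbit (n + 1) lam - scaledOrbit n lam‖ ≤ 8 * ‖lam‖ ^ n := by
  have h : ‖scaledOrbit n lam‖ ^ 2 ≤ 4 ^ 2 :=
    pow_le_pow_left₀ (norm_nonneg _) (norm_scaledOrbit_le_four n hlam) 2
  rw [scaledOrbit, sub_sub_cancel_left, norm_neg, norm_mul, norm_div, norm_pow, norm_pow]
  norm_num
  nlinarith [pow_nonneg (norm_nonneg lam) n]

theorem tendstoLocallyUniformlyOn_scaledOrbit :
    TendstoLocallyUniformlyOn scaledOrbit
      (fun lam => scaledOrbit 0 lam + ∑' n, (scaledOrbit (n + 1) lam - scaledOrbit n lam))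
      atTop (ball 0 1) := by
  rw [tendstoLocallyUniformlyOn_iff_forall_isCompact isOpen_ball]
  intro K hK hKc
  obtain ⟨ρ, ⟨hρ₀, hρ₁⟩, hKρ⟩ := exists_pos_lt_subset_ball one_pos hKc.isClosed hK
  refine tendstoUniformlyOn_of_norm_succ_sub_le
    ((summable_geometric_of_lt_one hρ₀.le hρ₁).mul_left 8) fun n lam hlam => ?_
  have hlamρ : ‖lam‖ < ρ := mem_ball_zero_iff.1 (hKρ hlam)
  calc _ ≤ 8 * ‖lam‖ ^ n := norm_scaledOrbit_succ_sub_le n (hlamρ.trans hρ₁)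
    _ ≤ 8 * ρ ^ n := by gcongr

theorem exists_limit_scaledOrbit : ∃ v : ℂ → ℂ, DifferentiableOn ℂ v (ball 0 1) ∧
    (∃ M : ℝ, ∀ lam ∈ ball (0 : ℂ) 1, ‖v lam‖ ≤ M) ∧ v 0 = 1 / 2 ∧
    ∀ K : Set ℂ, K ⊆ ball (0 : ℂ) 1 → IsCompact K → TendstoUniformlyOn scaledOrbit v atTop K := by
  have h := tendstoLocallyUniformlyOn_scaledOrbit
  refine ⟨_, h.differentiableOn (Eventually.of_forall fun n =>
    (differentiable_scaledOrbit n).differentiableOn) isOpen_ball,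
    ⟨4, fun lam hlam => le_of_tendsto' (h.tendsto_at hlam).norm
      fun n => norm_scaledOrbit_le_four n (mem_ball_zero_iff.1 hlam)⟩, ?_,
    (tendstoLocallyUniformlyOn_iff_forall_isCompact isOpen_ball).1 h⟩
  refine tendsto_nhds_unique (h.tendsto_at (mem_ball_self one_pos)) ?_
  refine (tendsto_add_atTop_iff_nat 1).1 ?_
  simp only [scaledOrbit_succ_apply_zero, tendsto_const_nhds]

end scaledOrbit

/-- The polynomials `u_n(λ) = λ^{-n} P_λ^n(1)` (where `P_λ(z) = λ(z - z²/2)`) satisfy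
`u_0 = 1`, `u_{n+1} = u_n - (λⁿ/2) u_n²`, the bound `|u_n(λ)| ≤ 2(1-|λ|)^{-2}` on `𝔻`,
and converge uniformly on compact subsets of `𝔻` to a bounded holomorphic function `u`
with `u(0) = 1/2`. -/
theorem stmt8 (u : ℕ → ℂ → ℂ)
    (hpoly : ∀ n, ∃ P : Polynomial ℂ, ∀ z, u n z = P.eval z)
    (hdef : ∀ (n : ℕ) (lam : ℂ), lam ≠ 0 →
      u n lam = lam ^ (-(n : ℤ)) * (fun z => lam * (z - z ^ 2 / 2))^[n] 1) :
    (∀ lam : ℂ, u 0 lam = 1) ∧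
    (∀ (n : ℕ) (lam : ℂ), u (n + 1) lam = u n lam - lam ^ n / 2 * (u n lam) ^ 2) ∧
    (∀ (n : ℕ) (lam : ℂ), ‖lam‖ < 1 → ‖u n lam‖ ≤ 2 / (1 - ‖lam‖) ^ 2) ∧
    (∃ v : ℂ → ℂ, DifferentiableOn ℂ v (Metric.ball 0 1) ∧
      (∃ M : ℝ, ∀ lam ∈ Metric.ball (0 : ℂ) 1, ‖v lam‖ ≤ M) ∧
      v 0 = 1 / 2 ∧
      ∀ K : Set ℂ, K ⊆ Metric.ball (0 : ℂ) 1 → IsCompact K →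
        TendstoUniformlyOn (fun n => u n) v atTop K) := by
  have hcont : ∀ n, Continuous (u n) := fun n => by
    obtain ⟨P, hP⟩ := hpoly n
    rw [funext hP]
    exact P.continuous
  obtain rfl : u = scaledOrbit := eq_scaledOrbit hcont hdef
  exact ⟨fun _ => rfl, fun _ _ => rfl, fun n _ => norm_scaledOrbit_le n,
    exists_limit_scaledOrbit⟩
end

section
/- If x is irrational and |x − p/q| < 1/(2q²) with q > 0, then p/q is a convergent of the continued fraction expansion of x. -/
/-- Gauss map iterates of `x`: `y₀ = {x}`, `y_{n+1} = {1/y_n}`. -/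
noncomputable def gIter (x : ℝ) : ℕ → ℝ
  | 0 => Int.fract x
  | n + 1 => Int.fract (1 / gIter x n)

/-- Partial quotients of the continued fraction of `x`. -/
noncomputable def cfa (x : ℝ) : ℕ → ℤ
  | 0 => ⌊x⌋
  | n + 1 => ⌊1 / gIter x n⌋

/-- Numerators of the convergents of `x`. -/
noncomputable def cfp (x : ℝ) : ℕ → ℤ
  | 0 => cfa x 0
  | 1 => cfa x 1 * cfa x 0 + 1
  | n + 2 => cfa x (n + 2) * cfp x (n + 1) + cfp x n

/-- Denominators of the convergents of `x`. -/
noncomputable def cfq (x : ℝ) : ℕ → ℤ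
  | 0 => 1
  | 1 => cfa x 1
  | n + 2 => cfa x (n + 2) * cfq x (n + 1) + cfq x n

/-!
The sequences `cfa`, `cfp`, `cfq` obey the same shift rule as Mathlib's `Real.convergent`: the data
of `x` at index `n + 1` are computed from those of `(fract x)⁻¹` at index `n`. Hence, by induction on
`n` over all irrational `x` at once, `cfp x n / cfq x n = Real.convergent x n`, and the theorem is
Legendre's theorem `Real.exists_rat_eq_convergent` applied to the reduced form of `P / Q`, whose
denominator divides `Q` and so still satisfies the hypothesis.
-/

open Int

lemma gIter_succ_eq_gIter_inv_fract (x : ℝ) :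
    ∀ n, gIter x (n + 1) = gIter (fract x)⁻¹ n
  | 0 => by simp [gIter]
  | n + 1 => by
    rw [gIter, gIter_succ_eq_gIter_inv_fract x n, gIter]

lemma cfa_succ_eq_cfa_inv_fract (x : ℝ) (n : ℕ) : cfa x (n + 1) = cfa (fract x)⁻¹ n := by
  cases n with
  | zero => simp [cfa, gIter]
  | succ n => rw [cfa, gIter_succ_eq_gIter_inv_fract, cfa]

lemma cfq_succ_eq_cfp_inv_fract (x : ℝ) : ∀ n, cfq x (n + 1) = cfp (fract x)⁻¹ n
  | 0 => cfa_succ_eq_cfa_inv_fract x 0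
  | 1 => by
    rw [cfq.eq_3, cfp.eq_2, cfq.eq_2, cfq.eq_1, cfa_succ_eq_cfa_inv_fract x 1,
      cfa_succ_eq_cfa_inv_fract x 0]
  | n + 2 => by
    rw [cfq.eq_3, cfp.eq_3, cfa_succ_eq_cfa_inv_fract, cfq_succ_eq_cfp_inv_fract x n,
      cfq_succ_eq_cfp_inv_fract x (n + 1)]

lemma cfp_succ_eq_floor_mul_add (x : ℝ) :
    ∀ n, cfp x (n + 1) = ⌊x⌋ * cfp (fract x)⁻¹ n + cfq (fract x)⁻¹ n
  | 0 => by
    rw [cfp.eq_2, cfp.eq_1, cfq.eq_1, cfa_succ_eq_cfa_inv_fract x 0, cfa.eq_1 x]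
    ring
  | 1 => by
    rw [cfp.eq_3, cfp.eq_2, cfp.eq_1, cfp.eq_2, cfq.eq_2, cfa_succ_eq_cfa_inv_fract x 1,
      cfa_succ_eq_cfa_inv_fract x 0, cfa.eq_1 x]
    ring
  | n + 2 => by
    rw [cfp.eq_3, cfa_succ_eq_cfa_inv_fract, cfp_succ_eq_floor_mul_add x n,
      cfp_succ_eq_floor_mul_add x (n + 1), cfp.eq_3 (fract x)⁻¹, cfq.eq_3 (fract x)⁻¹]
    ring

namespace Irrational

variable {x : ℝ}

lemma fract_pos (hx : Irrational x) : 0 < fract x :=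
  (fract_nonneg x).lt_of_ne' (fract_ne_zero_iff.2 fun ⟨m, hm⟩ => hx.ne_int m hm.symm)

lemma inv_fract (hx : Irrational x) : Irrational (fract x)⁻¹ :=
  (hx.sub_intCast ⌊x⌋).inv

lemma one_lt_inv_fract (hx : Irrational x) : 1 < (fract x)⁻¹ :=
  one_lt_inv₀ hx.fract_pos |>.2 (fract_lt_one x)

end Irrational

lemma one_le_cfa_succ {x : ℝ} (hx : Irrational x) (n : ℕ) : 1 ≤ cfa x (n + 1) := by
  induction n generalizing x with
  | zero =>
    rw [cfa_succ_eq_cfa_inv_fract, cfa, le_floor, cast_one]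
    exact hx.one_lt_inv_fract.le
  | succ n ih =>
    rw [cfa_succ_eq_cfa_inv_fract]
    exact ih hx.inv_fract

lemma cfp_pos {x : ℝ} (hx : Irrational x) (h1 : 1 ≤ x) : ∀ n, 0 < cfp x n
  | 0 => floor_pos.2 h1
  | 1 => by
    have ha₀ : 0 < cfa x 0 := floor_pos.2 h1
    have ha₁ := one_le_cfa_succ hx 0
    rw [cfp]
    positivity
  | n + 2 => by
    have ha := one_le_cfa_succ hx (n + 1)
    have hp := cfp_pos hx h1 (n + 1)
    have hp' := cfp_pos hx h1 n
    rw [cfp]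
    positivity

theorem Real.convergent_eq_cfp_div_cfq {x : ℝ} (hx : Irrational x) (n : ℕ) :
    (x.convergent n : ℝ) = cfp x n / cfq x n := by
  induction n generalizing x with
  | zero => simp [cfp, cfq, cfa]
  | succ n ih =>
    have hp : (cfp (fract x)⁻¹ n : ℝ) ≠ 0 :=
      mod_cast (cfp_pos hx.inv_fract hx.one_lt_inv_fract.le n).ne'
    rw [Real.convergent_succ, Rat.cast_add, Rat.cast_inv, ih hx.inv_fract,
      cfp_succ_eq_floor_mul_add, cfq_succ_eq_cfp_inv_fract]
    push_cast
    rw [inv_div, add_div' _ _ _ hp]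

theorem Real.exists_intCast_div_eq_convergent {ξ : ℝ} {P Q : ℤ} (hQ : 0 < Q)
    (h : |ξ - P / Q| < 1 / (2 * (Q : ℝ) ^ 2)) :
    ∃ n, (P / Q : ℝ) = ξ.convergent n := by
  set q : ℚ := P / Q
  have hq : (q : ℝ) = P / Q := by push_cast [q]; rfl
  have hden : (q.den : ℝ) ≤ Q := by
    have : (q.den : ℤ) ∣ Q := by
      simpa only [q, ← Rat.divInt_eq_div] using Rat.den_dvd P Q
    exact_mod_cast Int.le_of_dvd hQ this
  obtain ⟨n, hn⟩ := Real.exists_rat_eq_convergent (q := q) <| by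
    rw [hq]
    refine h.trans_le (one_div_le_one_div_of_le (by positivity) ?_)
    gcongr
  exact ⟨n, by rw [← hq, hn]⟩

/-- If `|ξ - P/Q| < 1/(2Q²)` then `P/Q` is a convergent of `ξ`. -/
theorem stmt10 (ξ : ℝ) (hξ : Irrational ξ) (P Q : ℤ) (hQ : 0 < Q)
    (h : |ξ - (P : ℝ) / (Q : ℝ)| < 1 / (2 * (Q : ℝ) ^ 2)) :
    ∃ n : ℕ, (P : ℝ) / (Q : ℝ) = (cfp ξ n : ℝ) / (cfq ξ n : ℝ) := by
  obtain ⟨n, hn⟩ := Real.exists_intCast_div_eq_convergent hQ h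
  exact ⟨n, hn.trans (Real.convergent_eq_cfp_div_cfq hξ n)⟩
end

section
/- The Gauss map A(x) = 1/x − ⌊1/x⌋ on (0,1) preserves the probability measure with density ρ(x) = 1/((1+x) log 2) with respect to Lebesgue measure. -/
/-!
The Gauss measure `μ` has distribution function `F t = log (1 + t) / log 2` on `[0, 1]`.
For `0 ≤ a < 1` the preimage of `Iic a` under the Gauss map is, inside `(0, 1]`, the disjoint
union over `n ≥ 1` of the intervals `[1/(n+a), 1/n]`, whose masses
`F (1/n) - F (1/(n+a)) = F (a/n) - F (a/(n+1))` telescope to `F a = μ (Iic a)`.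
Two probability measures on `ℝ` agreeing on all half-lines `Iic a` are equal.
-/

open MeasureTheory Set Filter Topology
open scoped Function
open scoped ENNReal

noncomputable section

def gaussMap (x : ℝ) : ℝ := Int.fract x⁻¹

def gaussCDF (t : ℝ) : ℝ := Real.log (1 + t) / Real.log 2

def gaussDensity (x : ℝ) : ℝ≥0∞ := ENNReal.ofReal (1 / ((1 + x) * Real.log 2))

def gaussMeasure : Measure ℝ := (volume.restrict (Ioo 0 1)).withDensity gaussDensity

theorem tsum_ofReal_sub_succ_of_antitone {f : ℕ → ℝ} {l : ℝ} (hf : Antitone f)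
    (hl : Tendsto f atTop (𝓝 l)) :
    ∑' n, ENNReal.ofReal (f n - f (n + 1)) = ENNReal.ofReal (f 0 - l) := by
  have hnonneg : ∀ n, 0 ≤ f n - f (n + 1) := fun n => sub_nonneg.2 (hf n.le_succ)
  have hsum : HasSum (fun n => f n - f (n + 1)) (f 0 - l) := by
    refine (hasSum_iff_tendsto_nat_of_nonneg hnonneg _).2 ?_
    simp_rw [Finset.sum_range_sub']
    exact tendsto_const_nhds.sub hl
  rw [← ENNReal.ofReal_tsum_of_nonneg hnonneg hsum.summable, hsum.tsum_eq]

theorem fract_le_iff_exists_mem_Icc {α : Type*} [Ring α] [LinearOrder α] [IsStrictOrderedRing α]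
    [FloorRing α] {a y : α} (ha : a < 1) :
    Int.fract y ≤ a ↔ ∃ m : ℤ, y ∈ Icc (m : α) (m + a) := by
  constructor
  · intro h
    exact ⟨⌊y⌋, Int.floor_le y, by rw [← sub_le_iff_le_add']; exact h⟩
  · rintro ⟨m, hm, hma⟩
    have hfloor : ⌊y⌋ = m := Int.floor_eq_iff.2 ⟨hm, hma.trans_lt (by gcongr)⟩
    rw [← Int.self_sub_floor, hfloor]
    exact sub_le_iff_le_add'.2 hma

theorem mem_Icc_inv_iff_inv_mem {α : Type*} [Field α] [LinearOrder α] [IsStrictOrderedRing α]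
    {x u v : α} (hx : 0 < x) (hu : 0 < u) (hv : 0 < v) :
    x ∈ Icc v⁻¹ u⁻¹ ↔ x⁻¹ ∈ Icc u v := by
  rw [mem_Icc, mem_Icc, inv_le_comm₀ hv hx, le_inv_comm₀ hx hu, and_comm]

theorem hasDerivAt_gaussCDF {x : ℝ} (hx : -1 < x) :
    HasDerivAt gaussCDF (1 / ((1 + x) * Real.log 2)) x := by
  have h := (((hasDerivAt_id x).const_add 1).log (ne_of_gt (by rw [id]; linarith))).div_const
    (Real.log 2)
  exact h.congr_deriv (by rw [id, div_div])

@[simp] theorem gaussCDF_zero : gaussCDF 0 = 0 := by simp [gaussCDF]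

@[simp] theorem gaussCDF_one : gaussCDF 1 = 1 := by
  rw [gaussCDF, one_add_one_eq_two, div_self (Real.log_pos one_lt_two).ne']

theorem gaussCDF_le_gaussCDF {s t : ℝ} (hs : -1 < s) (hst : s ≤ t) :
    gaussCDF s ≤ gaussCDF t := by
  unfold gaussCDF
  gcongr
  linarith

-- Both sides equal `log ((t + 1) (t + a) / (t (t + a + 1))) / log 2`.
theorem gaussCDF_inv_sub_gaussCDF_inv {t a : ℝ} (ht : 0 < t) (ha : 0 ≤ a) :
    gaussCDF t⁻¹ - gaussCDF (t + a)⁻¹ = gaussCDF (a / t) - gaussCDF (a / (t + 1)) := by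
  have hta : 0 < t + a := by linarith
  unfold gaussCDF
  rw [div_sub_div_same, div_sub_div_same]
  congr 1
  rw [show 1 + t⁻¹ = (t + 1) / t by field_simp,
    show 1 + (t + a)⁻¹ = (t + a + 1) / (t + a) by field_simp,
    show 1 + a / t = (t + a) / t by field_simp,
    show 1 + a / (t + 1) = (t + a + 1) / (t + 1) by field_simp; ring]
  rw [Real.log_div (by positivity) ht.ne', Real.log_div (by positivity) hta.ne',
    Real.log_div hta.ne' ht.ne', Real.log_div (by positivity) (by positivity)]
  ring

theorem lintegral_gaussDensity_Ioc {u v : ℝ} (hu : -1 < u) (huv : u ≤ v) :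
    ∫⁻ x in Ioc u v, gaussDensity x = ENNReal.ofReal (gaussCDF v - gaussCDF u) := by
  have hpos : ∀ x ∈ Icc u v, 0 < 1 + x := fun x hx => by linarith [hx.1]
  have hcont : ContinuousOn (fun x : ℝ => 1 / ((1 + x) * Real.log 2)) (Icc u v) :=
    continuousOn_const.div (by fun_prop) fun x hx =>
      mul_ne_zero (hpos x hx).ne' (Real.log_pos one_lt_two).ne'
  unfold gaussDensity
  rw [← ofReal_integral_eq_lintegral_ofReal
    (hcont.integrableOn_Icc.mono_set Ioc_subset_Icc_self)]
  · rw [← intervalIntegral.integral_of_le huv, intervalIntegral.integral_eq_sub_of_hasDerivAt]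
    · intro x hx
      rw [uIcc_of_le huv] at hx
      exact hasDerivAt_gaussCDF (by linarith [hx.1])
    · exact (hcont.mono (uIcc_of_le huv).le).intervalIntegrable
  · filter_upwards [ae_restrict_mem measurableSet_Ioc] with x hx
    have := hpos x (Ioc_subset_Icc_self hx)
    have := Real.log_pos one_lt_two
    positivity

theorem measurable_gaussMap : Measurable gaussMap :=
  measurable_fract.comp measurable_inv

theorem gaussMeasure_inter_Ioc (s : Set ℝ) : gaussMeasure (s ∩ Ioc 0 1) = gaussMeasure s := by
  have hrestrict : gaussMeasure.restrict (Ioc 0 1) = gaussMeasure := by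
    rw [gaussMeasure, restrict_withDensity measurableSet_Ioc,
      Measure.restrict_restrict measurableSet_Ioc, inter_eq_right.2 Ioo_subset_Ioc_self]
  rw [← Measure.restrict_apply' measurableSet_Ioc, hrestrict]

theorem gaussMeasure_of_subset {s : Set ℝ} (hs : MeasurableSet s) (h : s ⊆ Ioc 0 1) :
    gaussMeasure s = ∫⁻ x in s, gaussDensity x := by
  rw [gaussMeasure, Measure.restrict_congr_set Ioo_ae_eq_Ioc, withDensity_apply _ hs,
    Measure.restrict_restrict hs, inter_eq_left.2 h]

theorem gaussMeasure_Ioc {u v : ℝ} (hu : 0 ≤ u) (huv : u ≤ v) (hv : v ≤ 1) :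
    gaussMeasure (Ioc u v) = ENNReal.ofReal (gaussCDF v - gaussCDF u) := by
  rw [gaussMeasure_of_subset measurableSet_Ioc (Ioc_subset_Ioc hu hv),
    lintegral_gaussDensity_Ioc (by linarith) huv]

theorem gaussMeasure_Icc {u v : ℝ} (hu : 0 < u) (huv : u ≤ v) (hv : v ≤ 1) :
    gaussMeasure (Icc u v) = ENNReal.ofReal (gaussCDF v - gaussCDF u) := by
  rw [gaussMeasure_of_subset measurableSet_Icc (Icc_subset_Ioc hu hv),
    setLIntegral_congr Ioc_ae_eq_Icc.symm, lintegral_gaussDensity_Ioc (by linarith) huv]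

theorem gaussMeasure_Iic {a : ℝ} (ha : 0 ≤ a) (ha1 : a ≤ 1) :
    gaussMeasure (Iic a) = ENNReal.ofReal (gaussCDF a) := by
  rw [← gaussMeasure_inter_Ioc, Iic_inter_Ioc_of_le ha1, gaussMeasure_Ioc le_rfl ha ha1,
    gaussCDF_zero, sub_zero]

instance : IsProbabilityMeasure gaussMeasure where
  measure_univ := by
    rw [← gaussMeasure_inter_Ioc, univ_inter, gaussMeasure_Ioc le_rfl zero_le_one le_rfl,
      gaussCDF_one, gaussCDF_zero, sub_zero, ENNReal.ofReal_one]

theorem gaussMap_preimage_Iic_inter_Ioc {a : ℝ} (ha : 0 ≤ a) (ha1 : a < 1) :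
    gaussMap ⁻¹' Iic a ∩ Ioc 0 1 = ⋃ n : ℕ, Icc ((n + 1 + a)⁻¹) ((n + 1 : ℝ)⁻¹) := by
  ext x
  simp only [mem_inter_iff, mem_preimage, mem_Iic, mem_Ioc, mem_iUnion, gaussMap]
  constructor
  · rintro ⟨hfract, hx0, hx1⟩
    obtain ⟨m, hm, hma⟩ := (fract_le_iff_exists_mem_Icc ha1).1 hfract
    have hm0 : 0 < m := by
      have : (0 : ℝ) < m := by linarith [(one_le_inv₀ hx0).2 hx1]
      exact_mod_cast this
    obtain ⟨n, rfl⟩ : ∃ n : ℕ, m = n + 1 := ⟨(m - 1).toNat, by omega⟩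
    refine ⟨n, (mem_Icc_inv_iff_inv_mem hx0 (by positivity) (by positivity)).2 ?_⟩
    push_cast at hm hma
    exact ⟨hm, hma⟩
  · rintro ⟨n, hx⟩
    have hx0 : 0 < x := lt_of_lt_of_le (by positivity) hx.1
    refine ⟨(fract_le_iff_exists_mem_Icc ha1).2 ⟨n + 1, ?_⟩, hx0, ?_⟩
    · exact_mod_cast (mem_Icc_inv_iff_inv_mem hx0 (by positivity) (by positivity)).1 hx
    · exact hx.2.trans (inv_le_one_of_one_le₀ (by simp))

theorem pairwise_disjoint_Icc_inv {a : ℝ} (ha : 0 ≤ a) (ha1 : a < 1) :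
    Pairwise (Disjoint on fun n : ℕ => Icc ((n + 1 + a)⁻¹) ((n + 1 : ℝ)⁻¹)) := by
  have hanti : Antitone fun n : ℕ => ((n : ℝ) + 1)⁻¹ := fun m n h => by
    dsimp only
    gcongr
  have hsub (n : ℕ) : Icc ((n + 1 + a)⁻¹) ((n + 1 : ℝ)⁻¹) ⊆
      Ioc (((Order.succ n : ℕ) : ℝ) + 1)⁻¹ ((n + 1 : ℝ)⁻¹) := by
    refine Icc_subset_Ioc (inv_strictAnti₀ (by positivity) ?_) le_rfl
    rw [Order.succ_eq_add_one, Nat.cast_add, Nat.cast_one]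
    linarith
  exact hanti.pairwise_disjoint_on_Ioc_succ.mono fun m n h => h.mono (hsub m) (hsub n)

theorem gaussMeasure_gaussMap_preimage_Iic {a : ℝ} (ha : 0 ≤ a) (ha1 : a < 1) :
    gaussMeasure (gaussMap ⁻¹' Iic a) = ENNReal.ofReal (gaussCDF a) := by
  set g : ℕ → ℝ := fun n => gaussCDF (a / (n + 1))
  have hpiece (n : ℕ) : gaussMeasure (Icc ((n + 1 + a)⁻¹) ((n + 1 : ℝ)⁻¹)) =
      ENNReal.ofReal (g n - g (n + 1)) := by
    rw [gaussMeasure_Icc (by positivity) (inv_anti₀ (by positivity) (by linarith))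
      (inv_le_one_of_one_le₀ (by simp)), gaussCDF_inv_sub_gaussCDF_inv (by positivity) ha]
    simp only [g, Nat.cast_add, Nat.cast_one]
  have hg : Antitone g := fun m n h =>
    gaussCDF_le_gaussCDF (by linarith [show 0 ≤ a / (n + 1) by positivity]) (by gcongr)
  have hg0 : Tendsto g atTop (𝓝 0) := by
    have hlim : Tendsto (fun n : ℕ => a / ((n : ℝ) + 1)) atTop (𝓝 0) := by
      simpa [Function.comp_def] using
        (tendsto_const_div_atTop_nhds_zero_nat a).comp (tendsto_add_atTop_nat 1)
    simpa [Function.comp_def] using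
      (hasDerivAt_gaussCDF neg_one_lt_zero).continuousAt.tendsto.comp hlim
  rw [← gaussMeasure_inter_Ioc, gaussMap_preimage_Iic_inter_Ioc ha ha1,
    measure_iUnion (pairwise_disjoint_Icc_inv ha ha1) fun n => measurableSet_Icc,
    tsum_congr hpiece, tsum_ofReal_sub_succ_of_antitone hg hg0]
  simp [g]

theorem measurePreserving_gaussMap : MeasurePreserving gaussMap gaussMeasure gaussMeasure := by
  refine ⟨measurable_gaussMap, ?_⟩
  have : IsProbabilityMeasure (gaussMeasure.map gaussMap) :=
    Measure.isProbabilityMeasure_map measurable_gaussMap.aemeasurable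
  refine Measure.ext_of_Iic _ _ fun a => ?_
  rw [Measure.map_apply measurable_gaussMap measurableSet_Iic]
  rcases lt_or_ge a 0 with ha0 | ha0
  · have hempty : gaussMap ⁻¹' Iic a = ∅ :=
      eq_empty_of_forall_notMem fun x hx => (Int.fract_nonneg _).not_gt (lt_of_le_of_lt hx ha0)
    rw [hempty, measure_empty, eq_comm]
    refine measure_mono_null (Iic_subset_Iic.2 ha0.le) ?_
    rw [gaussMeasure_Iic le_rfl zero_le_one, gaussCDF_zero, ENNReal.ofReal_zero]
  rcases lt_or_ge a 1 with ha1 | ha1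
  · rw [gaussMeasure_gaussMap_preimage_Iic ha0 ha1, gaussMeasure_Iic ha0 ha1.le]
  · have huniv : gaussMap ⁻¹' Iic a = univ :=
      eq_univ_of_forall fun x => (Int.fract_lt_one _).le.trans ha1
    rw [huniv, measure_univ, eq_comm]
    refine le_antisymm prob_le_one ?_
    calc (1 : ℝ≥0∞) = gaussMeasure (Iic 1) := by
          rw [gaussMeasure_Iic zero_le_one le_rfl, gaussCDF_one, ENNReal.ofReal_one]
      _ ≤ gaussMeasure (Iic a) := measure_mono (Iic_subset_Iic.2 ha1)

end

/-- The Gauss map `A(x) = 1/x - ⌊1/x⌋` preserves the probability measure on `(0,1)`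
with density `ρ(x) = 1/((1+x) log 2)` with respect to Lebesgue measure. -/
theorem stmt13 :
    MeasurePreserving (fun x : ℝ => Int.fract x⁻¹)
      ((volume.restrict (Set.Ioo (0 : ℝ) 1)).withDensity
        (fun x => ENNReal.ofReal (1 / ((1 + x) * Real.log 2))))
      ((volume.restrict (Set.Ioo (0 : ℝ) 1)).withDensity
        (fun x => ENNReal.ofReal (1 / ((1 + x) * Real.log 2)))) ∧
    IsProbabilityMeasure
      ((volume.restrict (Set.Ioo (0 : ℝ) 1)).withDensity
        (fun x => ENNReal.ofReal (1 / ((1 + x) * Real.log 2)))) :=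
  ⟨measurePreserving_gaussMap, inferInstanceAs (IsProbabilityMeasure gaussMeasure)⟩
end

section
/- Functional equations of the Brjuno function: the Brjuno function B(x) = ∑_{n≥0} β_{n−1} log(1/x_n) satisfies B(x) = B(x+1) for all irrational x, and B(x) = −log x + x·B(1/x) for all irrational x ∈ (0,1). -/
/-- The Brjuno function `B(x) = ∑_{n≥0} β_{n-1} log(1/x_n)`, with values in `(0,+∞]`,
where `β_{n-1} = x₀x₁⋯x_{n-1}` (and `β_{-1} = 1`). -/
noncomputable def brjuno (x : ℝ) : ENNReal :=
  ∑' n : ℕ, ENNReal.ofReal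
    ((∏ i ∈ Finset.range n, gIter x i) * Real.log (1 / gIter x n))

/-- Functional equations of the Brjuno function: `B(x) = B(x+1)` for irrational `x`, and
`B(x) = -log x + x B(1/x)` for irrational `x ∈ (0,1)` (including the value `+∞`). -/
theorem stmt15 (x : ℝ) (hx : Irrational x) :
    brjuno (x + 1) = brjuno x ∧
    (x ∈ Set.Ioo (0 : ℝ) 1 →
      brjuno x = ENNReal.ofReal (Real.log (1 / x)) + ENNReal.ofReal x * brjuno (1 / x)) := by
  constructor
  · have h : ∀ n, gIter (x + 1) n = gIter x n := by
      intro n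
      induction n with
      | zero => simp [gIter, Int.fract_add_one]
      | succ n ih => simp [gIter, ih]
    unfold brjuno
    simp only [h]
  · intro hx01
    have hx0 : gIter x 0 = x := by
      simp [gIter, Int.fract_eq_self.mpr ⟨hx01.1.le, hx01.2⟩]
    have hshift : ∀ n, gIter x (n + 1) = gIter (1 / x) n := by
      intro n
      induction n with
      | zero => simp [gIter, Int.fract_eq_self.mpr ⟨hx01.1.le, hx01.2⟩]
      | succ n ih => simp only [gIter] at ih ⊢; rw [ih]
    have key : ∀ n, ENNReal.ofReal
          ((∏ i ∈ Finset.range (n + 1), gIter x i) * Real.log (1 / gIter x (n + 1)))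
        = ENNReal.ofReal x *
          ENNReal.ofReal ((∏ i ∈ Finset.range n, gIter (1 / x) i) *
            Real.log (1 / gIter (1 / x) n)) := by
      intro n
      rw [Finset.prod_range_succ']
      simp only [hshift, hx0]
      rw [← ENNReal.ofReal_mul hx01.1.le]
      congr 1
      ring
    rw [brjuno, tsum_eq_zero_add' ENNReal.summable]
    simp only [key]
    rw [ENNReal.tsum_mul_left, ← brjuno]
    congr 1
    simp [hx0]
end

section
/- There exists a universal constant C > 0 such that for every Brjuno number x (i.e. B(x) < +∞), |B(x) − ∑_{n≥0} (log q_{n+1})/q_n| ≤ C, where q_n are the denominators of the convergents of x. -/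
/-!
Write `β_n = y_0 ⋯ y_{n-1}` (the paper's `β_{n-1}`) for the products of the Gauss iterates.
The recursion for the denominators gives `β_{n+1} q_{n+1} + β_{n+2} q_n = 1`, whence
`1/2 < β_n q_n ≤ 1` and `1 - β_n q_n ≤ y_n`. Since `β_{n+1} = β_n y_n`, taking logarithms
gives `log q_{n+1} = log (1/y_n) + log q_n + log (β_{n+1} q_{n+1}) - log (β_n q_n)`, so the
`n`-th terms of the two series differ by at most `(2 + log q_n)/q_n ≤ 4/√q_n`. As
`q_{n+2} ≥ 2 q_n`, these errors are dominated by a geometric series that does not depend on `x`.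
-/

open Real

namespace Brjuno

theorem two_pow_div_two_le_of_two_mul_le {q : ℕ → ℝ} (h0 : 1 ≤ q 0) (h1 : 1 ≤ q 1)
    (h : ∀ n, 2 * q n ≤ q (n + 2)) : ∀ n, (2 : ℝ) ^ (n / 2) ≤ q n
  | 0 => by simpa using h0
  | 1 => by simpa using h1
  | n + 2 => by
    rw [show (n + 2) / 2 = n / 2 + 1 by omega, pow_succ]
    linarith [two_pow_div_two_le_of_two_mul_le h0 h1 h n, h n]

noncomputable def rho : ℝ := √(√2)

theorem one_lt_rho : 1 < rho :=
  (lt_sqrt zero_le_one).2 (by simpa using one_lt_sqrt_two)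

theorem rho_pos : 0 < rho := one_pos.trans one_lt_rho

theorem rho_pow_four : rho ^ 4 = 2 := by
  rw [show 4 = 2 * 2 by rfl, pow_mul, rho, sq_sqrt (sqrt_nonneg 2), sq_sqrt zero_le_two]

theorem rho_pow_le_mul_sqrt {q : ℝ} {n : ℕ} (h : (2 : ℝ) ^ (n / 2) ≤ q) :
    rho ^ n ≤ rho * √q :=
  calc rho ^ n ≤ rho ^ (2 * (n / 2) + 1) := pow_le_pow_right₀ one_lt_rho.le (by omega)
    _ = rho * rho ^ (2 * (n / 2)) := pow_succ' _ _
    _ ≤ rho * √q := by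
      gcongr
      · exact rho_pos.le
      rw [le_sqrt (pow_nonneg rho_pos.le _), ← pow_mul,
        show 2 * (n / 2) * 2 = 4 * (n / 2) by ring, pow_mul, rho_pow_four]
      · exact h
      · exact (pow_nonneg zero_le_two _).trans h

theorem two_add_log_div_le {q : ℝ} (hq : 1 ≤ q) : (2 + log q) / q ≤ 4 / √q := by
  have hs : 1 ≤ √q := one_le_sqrt.mpr hq
  have hsq : √q * √q = q := mul_self_sqrt (by linarith)
  have hlog : log q ≤ 2 * √q - 2 := by
    have := log_le_sub_one_of_pos (by linarith : 0 < √q)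
    rw [log_sqrt (by linarith)] at this
    linarith
  rw [div_le_div_iff₀ (by linarith) (by linarith)]
  nlinarith [mul_le_mul_of_nonneg_right hlog (by linarith : (0 : ℝ) ≤ √q)]

theorem neg_one_lt_log_of_half_lt {y : ℝ} (hy : 1 / 2 < y) : -1 < log y := by
  have hy0 : 0 < y := by linarith
  have hinv : y⁻¹ < 2 := (inv_lt_comm₀ hy0 two_pos).2 (by linarith)
  linarith [one_sub_inv_le_log_of_pos hy0]

theorem mul_log_one_div_le {g : ℝ} (hg : 0 < g) : g * log (1 / g) ≤ 1 - g := by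
  calc g * log (1 / g) ≤ g * (1 / g - 1) :=
        mul_le_mul_of_nonneg_left (log_le_sub_one_of_pos (by positivity)) hg.le
    _ = 1 - g := by field_simp

theorem summable_and_abs_tsum_sub_le {α : Type*} {t s u : α → ℝ} (ht : Summable t)
    (hu : Summable u) (h : ∀ n, |t n - s n| ≤ u n) :
    Summable s ∧ |∑' n, t n - ∑' n, s n| ≤ ∑' n, u n := by
  have hd : Summable (fun n => t n - s n) := Summable.of_norm_bounded hu h
  have hs : Summable s := by simpa using ht.sub hd
  refine ⟨hs, ?_⟩
  rw [← ht.tsum_sub hs]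
  exact tsum_of_norm_bounded hu.hasSum fun n => (Real.norm_eq_abs _).trans_le (h n)

variable {x : ℝ}

theorem irrational_gIter (hx : Irrational x) : ∀ n, Irrational (gIter x n)
  | 0 => by simpa [gIter, ← Int.self_sub_floor] using hx.sub_intCast ⌊x⌋
  | n + 1 => by
    simpa [gIter, ← Int.self_sub_floor] using
      (irrational_gIter hx n).inv.sub_intCast ⌊(gIter x n)⁻¹⌋

theorem gIter_pos (hx : Irrational x) (n : ℕ) : 0 < gIter x n := by
  refine lt_of_le_of_ne ?_ (irrational_gIter hx n).ne_zero.symm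
  cases n <;> exact Int.fract_nonneg _

theorem gIter_lt_one (n : ℕ) : gIter x n < 1 := by
  cases n <;> exact Int.fract_lt_one _

theorem cfa_succ_add_gIter_succ_mul (hx : Irrational x) (n : ℕ) :
    (cfa x (n + 1) + gIter x (n + 1)) * gIter x n = 1 := by
  rw [show (cfa x (n + 1) : ℝ) + gIter x (n + 1) = 1 / gIter x n from Int.floor_add_fract _,
    one_div_mul_cancel (gIter_pos hx n).ne']

theorem one_le_cfa_succ (hx : Irrational x) (n : ℕ) : (1 : ℝ) ≤ cfa x (n + 1) := by
  have h := one_lt_one_div (gIter_pos hx n) (gIter_lt_one n)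
  exact_mod_cast Int.le_floor.mpr (by exact_mod_cast h.le)

theorem cfq_add_two (n : ℕ) :
    (cfq x (n + 2) : ℝ) = cfa x (n + 2) * cfq x (n + 1) + cfq x n := by
  simp [cfq]

theorem one_le_cfq (hx : Irrational x) : ∀ n, (1 : ℝ) ≤ cfq x n
  | 0 => by simp [cfq]
  | 1 => by simpa [cfq] using one_le_cfa_succ hx 0
  | n + 2 => by
    rw [cfq_add_two]
    nlinarith [one_le_cfq hx n, one_le_cfq hx (n + 1), one_le_cfa_succ hx (n + 1)]

theorem cfq_le_cfq_succ (hx : Irrational x) : ∀ n, (cfq x n : ℝ) ≤ cfq x (n + 1)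
  | 0 => by simpa [cfq] using one_le_cfq hx 1
  | n + 1 => by
    rw [cfq_add_two]
    nlinarith [one_le_cfq hx n, one_le_cfq hx (n + 1), one_le_cfa_succ hx (n + 1)]

theorem two_mul_cfq_le_cfq_add_two (hx : Irrational x) (n : ℕ) :
    2 * (cfq x n : ℝ) ≤ cfq x (n + 2) := by
  rw [cfq_add_two]
  nlinarith [cfq_le_cfq_succ hx n, one_le_cfq hx n, one_le_cfa_succ hx (n + 1)]

theorem two_pow_div_two_le_cfq (hx : Irrational x) (n : ℕ) : (2 : ℝ) ^ (n / 2) ≤ cfq x n :=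
  two_pow_div_two_le_of_two_mul_le (one_le_cfq hx 0) (one_le_cfq hx 1)
    (two_mul_cfq_le_cfq_add_two hx) n

noncomputable def beta (x : ℝ) (n : ℕ) : ℝ := ∏ i ∈ Finset.range n, gIter x i

theorem beta_succ (n : ℕ) : beta x (n + 1) = beta x n * gIter x n :=
  Finset.prod_range_succ _ _

theorem beta_pos (hx : Irrational x) (n : ℕ) : 0 < beta x n :=
  Finset.prod_pos fun i _ => gIter_pos hx i

theorem beta_mul_cfq_add (hx : Irrational x) :
    ∀ n, beta x (n + 1) * cfq x (n + 1) + beta x (n + 2) * cfq x n = 1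
  | 0 => by
    simp only [beta, cfq, Finset.prod_range_succ, Finset.prod_range_zero, one_mul, Int.cast_one]
    linear_combination cfa_succ_add_gIter_succ_mul hx 0
  | n + 1 => by
    have h := beta_mul_cfq_add hx n
    rw [beta_succ (n + 1)] at h
    rw [cfq_add_two, beta_succ (n + 2), beta_succ (n + 1)]
    linear_combination h + beta x (n + 1) * cfq x (n + 1) * cfa_succ_add_gIter_succ_mul hx (n + 1)

theorem beta_mul_cfq_le_one (hx : Irrational x) : ∀ n, beta x n * cfq x n ≤ 1
  | 0 => by simp [beta, cfq]
  | n + 1 => by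
    linarith [beta_mul_cfq_add hx n,
      mul_pos (beta_pos hx (n + 2)) (one_pos.trans_le (one_le_cfq hx n))]

theorem one_sub_beta_mul_cfq_le (hx : Irrational x) :
    ∀ n, 1 - beta x n * cfq x n ≤ gIter x n * (beta x n * cfq x n)
  | 0 => by simpa [beta, cfq] using (gIter_pos hx 0).le
  | n + 1 => by
    have h := beta_mul_cfq_add hx n
    rw [beta_succ (n + 1)] at h
    nlinarith [mul_le_mul_of_nonneg_left (cfq_le_cfq_succ hx n)
      (mul_pos (beta_pos hx (n + 1)) (gIter_pos hx (n + 1))).le]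

theorem half_lt_beta_mul_cfq (hx : Irrational x) (n : ℕ) : 1 / 2 < beta x n * cfq x n := by
  have hP := mul_pos (beta_pos hx n) (one_pos.trans_le (one_le_cfq hx n))
  nlinarith [one_sub_beta_mul_cfq_le hx n, mul_pos (sub_pos.2 (gIter_lt_one (x := x) n)) hP]

theorem one_sub_beta_mul_cfq_le_gIter (hx : Irrational x) (n : ℕ) :
    1 - beta x n * cfq x n ≤ gIter x n := by
  nlinarith [one_sub_beta_mul_cfq_le hx n, beta_mul_cfq_le_one hx n, gIter_pos hx n]

noncomputable def brjunoTerm (x : ℝ) (n : ℕ) : ℝ := beta x n * log (1 / gIter x n)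

theorem brjunoTerm_nonneg (hx : Irrational x) (n : ℕ) : 0 ≤ brjunoTerm x n :=
  mul_nonneg (beta_pos hx n).le (log_nonneg (one_le_one_div (gIter_pos hx n) (gIter_lt_one n).le))

theorem hasSum_brjunoTerm (hx : Irrational x) (hB : brjuno x ≠ ⊤) :
    HasSum (brjunoTerm x) (brjuno x).toReal := by
  have hB' : ∑' n, ENNReal.ofReal (brjunoTerm x n) ≠ ⊤ := hB
  have hterm (n : ℕ) : (ENNReal.ofReal (brjunoTerm x n)).toReal = brjunoTerm x n :=
    ENNReal.toReal_ofReal (brjunoTerm_nonneg hx n)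
  change HasSum _ (∑' n, ENNReal.ofReal (brjunoTerm x n)).toReal
  rw [ENNReal.tsum_toReal_eq fun _ => ENNReal.ofReal_ne_top]
  simpa only [hterm] using ENNReal.hasSum_toReal hB'

theorem log_cfq_succ (hx : Irrational x) (n : ℕ) :
    log (cfq x (n + 1)) = log (1 / gIter x n) + log (cfq x n)
      + log (beta x (n + 1) * cfq x (n + 1)) - log (beta x n * cfq x n) := by
  have hb := (beta_pos hx n).ne'
  have hg := (gIter_pos hx n).ne'
  have hq := (one_pos.trans_le (one_le_cfq hx n)).ne'
  have hq' := (one_pos.trans_le (one_le_cfq hx (n + 1))).ne'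
  rw [beta_succ, log_mul (mul_ne_zero hb hg) hq', log_mul hb hg, log_mul hb hq, one_div, log_inv]
  ring

theorem abs_brjunoTerm_sub_le (hx : Irrational x) (n : ℕ) :
    |brjunoTerm x n - log (cfq x (n + 1)) / cfq x n| ≤ (2 + log (cfq x n)) / cfq x n := by
  have hq := one_le_cfq hx n
  have hg := gIter_pos hx n
  set P := beta x n * cfq x n
  set P' := beta x (n + 1) * cfq x (n + 1)
  set L := log (1 / gIter x n)
  have hL : 0 ≤ L := log_nonneg (one_le_one_div hg (gIter_lt_one n).le)
  have hPL : 0 ≤ (1 - P) * L := mul_nonneg (by linarith [beta_mul_cfq_le_one hx n]) hL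
  have hPL' : (1 - P) * L ≤ 1 := by
    nlinarith [one_sub_beta_mul_cfq_le_gIter hx n, mul_log_one_div_le hg]
  have hdiff : brjunoTerm x n - log (cfq x (n + 1)) / cfq x n
      = ((P - 1) * L + log P - log P' - log (cfq x n)) / cfq x n := by
    rw [log_cfq_succ hx n, brjunoTerm]
    field_simp
    ring
  rw [hdiff, abs_div, abs_of_pos (show (0 : ℝ) < cfq x n by linarith),
    div_le_div_iff_of_pos_right (by linarith), abs_le]
  have hlogP := neg_one_lt_log_of_half_lt (half_lt_beta_mul_cfq hx n)
  have hlogP' := neg_one_lt_log_of_half_lt (half_lt_beta_mul_cfq hx (n + 1))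
  have hP0 := log_nonpos (by linarith [half_lt_beta_mul_cfq hx n]) (beta_mul_cfq_le_one hx n)
  have hP'0 := log_nonpos (by linarith [half_lt_beta_mul_cfq hx (n + 1)])
    (beta_mul_cfq_le_one hx (n + 1))
  have hlogq := log_nonneg hq
  constructor <;> linarith

theorem abs_brjunoTerm_sub_le_geometric (hx : Irrational x) (n : ℕ) :
    |brjunoTerm x n - log (cfq x (n + 1)) / cfq x n| ≤ 4 * rho * rho⁻¹ ^ n := by
  have hq := one_le_cfq hx n
  have hs : 0 < √(cfq x n : ℝ) := sqrt_pos.2 (by linarith)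
  have hρn : 0 < rho ^ n := pow_pos rho_pos n
  calc |brjunoTerm x n - log (cfq x (n + 1)) / cfq x n|
      ≤ (2 + log (cfq x n)) / cfq x n := abs_brjunoTerm_sub_le hx n
    _ ≤ 4 / √(cfq x n : ℝ) := two_add_log_div_le hq
    _ ≤ 4 * rho / rho ^ n := by
      rw [div_le_div_iff₀ hs hρn, mul_assoc]
      exact mul_le_mul_of_nonneg_left (rho_pow_le_mul_sqrt (two_pow_div_two_le_cfq hx n))
        zero_le_four
    _ = 4 * rho * rho⁻¹ ^ n := by rw [inv_pow, div_eq_mul_inv]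

end Brjuno

open Brjuno

/-- There is a universal constant `C > 0` such that for every Brjuno number `x`,
`|B(x) - ∑_{n≥0} (log q_{n+1})/q_n| ≤ C`. -/
theorem stmt16 :
    ∃ C : ℝ, 0 < C ∧ ∀ x : ℝ, Irrational x → brjuno x ≠ ⊤ →
      ∃ S : ℝ,
        HasSum (fun n : ℕ => Real.log (cfq x (n + 1) : ℝ) / (cfq x n : ℝ)) S ∧
        |(brjuno x).toReal - S| ≤ C := by
  have hu : Summable (fun n : ℕ => 4 * rho * rho⁻¹ ^ n) :=
    (summable_geometric_of_lt_one (inv_nonneg.2 rho_pos.le)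
      (inv_lt_one_of_one_lt₀ one_lt_rho)).mul_left _
  refine ⟨∑' n : ℕ, 4 * rho * rho⁻¹ ^ n,
    hu.tsum_pos (fun n => by have := rho_pos; positivity) 0 (by simp [rho_pos]), ?_⟩
  intro x hx hB
  have ht := hasSum_brjunoTerm hx hB
  obtain ⟨hs, hle⟩ :=
    summable_and_abs_tsum_sub_le ht.summable hu (abs_brjunoTerm_sub_le_geometric hx)
  exact ⟨_, hs.hasSum, ht.tsum_eq ▸ hle⟩
end

section
/- Davie's lemma on small divisors: let α be irrational with convergents p_j/q_j, let k, n be positive integers, and suppose ‖nα‖ ≤ 1/(4 q_k), where ‖·‖ denotes distance to the nearest integer. Then n ≥ q_k, and either q_k divides n or n ≥ q_{k+1}/4. -/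
/-!
Write `P_j = y_0 ⋯ y_j` for the product of the Gauss map iterates. Then
`q_j α - p_j = (-1)^j P_j` and `q_{j+1} P_j + q_j P_{j+1} = 1`, so
`1/(2 q_{j+1}) < P_j < 1/q_{j+1}`. As `(q_j, q_{j+1}; p_j, p_{j+1})` is unimodular, every integer
pair `(r, s)` is `x (q_j, p_j) + y (q_{j+1}, p_{j+1})` with integers `x, y`; when `0 < r < q_{j+1}`
we get `x ≠ 0` and `x y ≤ 0`, whence `|r α - s| = |x P_j - y P_{j+1}| ≥ P_j`.
So `‖n α‖ ≤ 1/(4 q_{j+1}) < P_j` forces `n ≥ q_{j+1}`, and writing `n = m q_{j+1} + r` with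
`0 < r < q_{j+1}` gives `P_j ≤ ‖n α‖ + m P_{j+1}`, i.e. `1/(4 q_{j+1}) < m P_{j+1} < m / q_{j+2}`,
so `n ≥ m q_{j+1} > q_{j+2}/4`.
-/

theorem Int.ne_zero_and_mul_nonpos_of_pos_of_lt {x y q q' : ℤ} (hq : 0 < q) (hqq' : q ≤ q')
    (hpos : 0 < x * q + y * q') (hlt : x * q + y * q' < q') : x ≠ 0 ∧ x * y ≤ 0 := by
  rcases lt_trichotomy x 0 with hx | rfl | hx <;> rcases lt_trichotomy y 0 with hy | rfl | hy
  all_goals first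
    | exact ⟨by omega, by nlinarith⟩
    | exfalso; nlinarith

theorem abs_le_abs_sub_of_mul_nonpos {R : Type*} [CommRing R] [LinearOrder R]
    [IsStrictOrderedRing R] {u v : R} (h : u * v ≤ 0) : |u| ≤ |u - v| := by
  refine sq_le_sq.mp ?_
  have hexp : (u - v) ^ 2 = u ^ 2 - 2 * (u * v) + v ^ 2 := by ring
  linarith [sq_nonneg v]

section ContinuedFraction

variable {α : ℝ}

theorem irrational_gIter (hα : Irrational α) : ∀ j, Irrational (gIter α j)
  | 0 => hα.sub_intCast ⌊α⌋
  | j + 1 => by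
    show Irrational (Int.fract (1 / gIter α j))
    rw [Int.fract, one_div]
    exact (irrational_gIter hα j).inv.sub_intCast _

theorem gIter_pos (hα : Irrational α) (j : ℕ) : 0 < gIter α j := by
  have hnonneg : 0 ≤ gIter α j := by cases j <;> exact Int.fract_nonneg _
  exact hnonneg.lt_of_ne' (irrational_gIter hα j).ne_zero

theorem gIter_lt_one (j : ℕ) : gIter α j < 1 := by
  cases j <;> exact Int.fract_lt_one _

theorem one_div_gIter (j : ℕ) : 1 / gIter α j = cfa α (j + 1) + gIter α (j + 1) :=
  (Int.floor_add_fract _).symm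

theorem one_le_cfa_succ_s17 (hα : Irrational α) (j : ℕ) : 1 ≤ cfa α (j + 1) := by
  have h : (1 : ℝ) ≤ 1 / gIter α j := by
    rw [le_div_iff₀ (gIter_pos hα j), one_mul]; exact (gIter_lt_one j).le
  exact Int.le_floor.mpr (by simpa using h)

theorem one_le_cfq (hα : Irrational α) : ∀ j, 1 ≤ cfq α j
  | 0 => le_rfl
  | 1 => one_le_cfa_succ_s17 hα 0
  | j + 2 => by
    have := one_le_cfq hα (j + 1); have := one_le_cfq hα j
    have := one_le_cfa_succ_s17 hα (j + 1)
    show 1 ≤ cfa α (j + 2) * cfq α (j + 1) + cfq α j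
    nlinarith

theorem cfq_le_cfq_succ (hα : Irrational α) : ∀ j, cfq α j ≤ cfq α (j + 1)
  | 0 => one_le_cfa_succ_s17 hα 0
  | j + 1 => by
    have := one_le_cfq hα (j + 1); have := one_le_cfq hα j
    have := one_le_cfa_succ_s17 hα (j + 1)
    show cfq α (j + 1) ≤ cfa α (j + 2) * cfq α (j + 1) + cfq α j
    nlinarith

theorem cfp_succ_mul_cfq_sub_cfp_mul_cfq_succ (j : ℕ) :
    cfp α (j + 1) * cfq α j - cfp α j * cfq α (j + 1) = (-1) ^ j := by
  induction j with
  | zero =>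
    show (cfa α 1 * cfa α 0 + 1) * 1 - cfa α 0 * cfa α 1 = 1
    ring
  | succ j ih =>
    show (cfa α (j + 2) * cfp α (j + 1) + cfp α j) * cfq α (j + 1)
        - cfp α (j + 1) * (cfa α (j + 2) * cfq α (j + 1) + cfq α j) = (-1) ^ (j + 1)
    linear_combination -ih

/-- `P_j = y_0 ⋯ y_j`, which equals `|q_j α - p_j|` (`abs_cfq_mul_sub_cfp`). -/
noncomputable def cfErr (α : ℝ) (j : ℕ) : ℝ := ∏ i ∈ Finset.range (j + 1), gIter α i

theorem cfErr_zero : cfErr α 0 = gIter α 0 := by simp [cfErr]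

theorem cfErr_succ (j : ℕ) : cfErr α (j + 1) = cfErr α j * gIter α (j + 1) :=
  Finset.prod_range_succ _ _

theorem cfErr_pos (hα : Irrational α) (j : ℕ) : 0 < cfErr α j :=
  Finset.prod_pos fun i _ => gIter_pos hα i

theorem cfErr_succ_lt (hα : Irrational α) (j : ℕ) : cfErr α (j + 1) < cfErr α j := by
  rw [cfErr_succ]
  exact mul_lt_of_lt_one_right (cfErr_pos hα j) (gIter_lt_one _)

theorem cfErr_add_two (hα : Irrational α) (j : ℕ) :
    cfErr α (j + 2) = cfErr α j - cfa α (j + 2) * cfErr α (j + 1) := by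
  have key := one_div_gIter (α := α) (j + 1)
  rw [div_eq_iff (gIter_pos hα (j + 1)).ne'] at key
  rw [cfErr_succ, cfErr_succ]
  linear_combination (-cfErr α j) * key

theorem cfq_mul_sub_cfp (hα : Irrational α) :
    ∀ j, (cfq α j : ℝ) * α - cfp α j = (-1) ^ j * cfErr α j
  | 0 => by
    show ((1 : ℤ) : ℝ) * α - ⌊α⌋ = 1 * cfErr α 0
    rw [cfErr_zero, Int.cast_one, one_mul, one_mul]
    rfl
  | 1 => by
    have key := one_div_gIter (α := α) 0
    rw [div_eq_iff (gIter_pos hα 0).ne'] at key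
    have hy₀ : gIter α 0 = α - cfa α 0 := rfl
    simp only [cfq, cfp, cfErr_succ, cfErr_zero]
    push_cast
    linear_combination -key - (cfa α 1 : ℝ) * hy₀
  | j + 2 => by
    have e₁ := cfq_mul_sub_cfp hα (j + 1)
    have e₀ := cfq_mul_sub_cfp hα j
    simp only [cfq, cfp, cfErr_add_two hα]
    push_cast
    linear_combination (cfa α (j + 2) : ℝ) * e₁ + e₀

theorem abs_cfq_mul_sub_cfp (hα : Irrational α) (j : ℕ) :
    |(cfq α j : ℝ) * α - cfp α j| = cfErr α j := by
  rw [cfq_mul_sub_cfp hα, abs_mul, abs_neg_one_pow, one_mul, abs_of_pos (cfErr_pos hα j)]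

theorem cfq_succ_mul_cfErr_add_cfq_mul_cfErr_succ (hα : Irrational α) :
    ∀ j, (cfq α (j + 1) : ℝ) * cfErr α j + cfq α j * cfErr α (j + 1) = 1
  | 0 => by
    have key := one_div_gIter (α := α) 0
    rw [div_eq_iff (gIter_pos hα 0).ne'] at key
    simp only [cfq, cfErr_succ, cfErr_zero]
    push_cast
    linear_combination -key
  | j + 1 => by
    have ih := cfq_succ_mul_cfErr_add_cfq_mul_cfErr_succ hα j
    simp only [cfq, cfErr_add_two hα]
    push_cast
    linear_combination ih

theorem one_lt_two_mul_cfq_succ_mul_cfErr (hα : Irrational α) (j : ℕ) :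
    1 < 2 * cfq α (j + 1) * cfErr α j := by
  have hid := cfq_succ_mul_cfErr_add_cfq_mul_cfErr_succ hα j
  have hlt := cfErr_succ_lt hα j
  have hq : (cfq α j : ℝ) ≤ cfq α (j + 1) := by exact_mod_cast cfq_le_cfq_succ hα j
  have hq₀ : (1 : ℝ) ≤ cfq α j := by exact_mod_cast one_le_cfq hα j
  nlinarith [cfErr_pos hα (j + 1)]

theorem cfq_succ_mul_cfErr_lt_one (hα : Irrational α) (j : ℕ) :
    (cfq α (j + 1) : ℝ) * cfErr α j < 1 := by
  have hid := cfq_succ_mul_cfErr_add_cfq_mul_cfErr_succ hα j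
  have hq₀ : (1 : ℝ) ≤ cfq α j := by exact_mod_cast one_le_cfq hα j
  nlinarith [cfErr_pos hα (j + 1)]

theorem cfErr_le_abs_mul_sub (hα : Irrational α) (j : ℕ) {r : ℤ} (s : ℤ) (hr₀ : 0 < r)
    (hr : r < cfq α (j + 1)) : cfErr α j ≤ |(r : ℝ) * α - s| := by
  have hdet := cfp_succ_mul_cfq_sub_cfp_mul_cfq_succ (α := α) j
  have hsign : (-1 : ℤ) ^ j * (-1) ^ j = 1 := by rw [← mul_pow]; norm_num
  set x : ℤ := (-1) ^ j * (r * cfp α (j + 1) - s * cfq α (j + 1))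
  set y : ℤ := (-1) ^ j * (s * cfq α j - r * cfp α j)
  have hrxy : x * cfq α j + y * cfq α (j + 1) = r := by
    linear_combination ((-1 : ℤ) ^ j * r) * hdet + r * hsign
  have hsxy : x * cfp α j + y * cfp α (j + 1) = s := by
    linear_combination ((-1 : ℤ) ^ j * s) * hdet + s * hsign
  obtain ⟨hx, hxy⟩ := Int.ne_zero_and_mul_nonpos_of_pos_of_lt
    (one_le_cfq hα j) (cfq_le_cfq_succ hα j) (hrxy ▸ hr₀) (hrxy ▸ hr)
  have hrR : (r : ℝ) = x * cfq α j + y * cfq α (j + 1) := by exact_mod_cast hrxy.symm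
  have hsR : (s : ℝ) = x * cfp α j + y * cfp α (j + 1) := by exact_mod_cast hsxy.symm
  have hform : (r : ℝ) * α - s = (-1) ^ j * (x * cfErr α j - y * cfErr α (j + 1)) := by
    rw [hrR, hsR]
    linear_combination x * cfq_mul_sub_cfp hα j + y * cfq_mul_sub_cfp hα (j + 1)
  have hprod : (x * cfErr α j) * (y * cfErr α (j + 1)) ≤ 0 := by
    rw [mul_mul_mul_comm]
    exact mul_nonpos_of_nonpos_of_nonneg (by exact_mod_cast hxy)
      (mul_pos (cfErr_pos hα j) (cfErr_pos hα (j + 1))).le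
  have hx₁ : (1 : ℝ) ≤ |(x : ℝ)| := by exact_mod_cast Int.one_le_abs hx
  calc cfErr α j ≤ |(x : ℝ)| * cfErr α j := le_mul_of_one_le_left (cfErr_pos hα j).le hx₁
    _ = |x * cfErr α j| := by rw [abs_mul, abs_of_pos (cfErr_pos hα j)]
    _ ≤ |x * cfErr α j - y * cfErr α (j + 1)| := abs_le_abs_sub_of_mul_nonpos hprod
    _ = |(r : ℝ) * α - s| := by rw [hform, abs_mul, abs_neg_one_pow, one_mul]

theorem cfq_succ_le_of_abs_mul_sub_lt (hα : Irrational α) (j : ℕ) {n : ℤ} (s : ℤ) (hn : 0 < n)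
    (h : |(n : ℝ) * α - s| < cfErr α j) : cfq α (j + 1) ≤ n := by
  by_contra! hlt
  exact (cfErr_le_abs_mul_sub hα j s hn hlt).not_gt h

theorem cfErr_le_abs_mul_sub_add (hα : Irrational α) (j : ℕ) {n : ℤ} (s : ℤ) (hn : 0 ≤ n)
    (hdvd : ¬ cfq α (j + 1) ∣ n) :
    cfErr α j ≤ |(n : ℝ) * α - s| + (n / cfq α (j + 1) : ℤ) * cfErr α (j + 1) := by
  set q := cfq α (j + 1)
  set m := n / q
  have hq : 0 < q := one_le_cfq hα (j + 1)
  have hm : 0 ≤ m := Int.ediv_nonneg hn hq.le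
  have hr₀ : 0 < n % q :=
    (Int.emod_nonneg n hq.ne').lt_of_ne' fun h => hdvd (Int.dvd_of_emod_eq_zero h)
  have hnR : (n : ℝ) = q * m + (n % q : ℤ) := by exact_mod_cast (Int.mul_ediv_add_emod n q).symm
  have hsplit : ((n % q : ℤ) : ℝ) * α - (s - m * cfp α (j + 1) : ℤ)
      = ((n : ℝ) * α - s) - m * ((q : ℝ) * α - cfp α (j + 1)) := by
    rw [hnR]; push_cast; ring
  calc cfErr α j ≤ |((n % q : ℤ) : ℝ) * α - (s - m * cfp α (j + 1) : ℤ)| :=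
        cfErr_le_abs_mul_sub hα j _ hr₀ (Int.emod_lt_of_pos n hq)
    _ ≤ |(n : ℝ) * α - s| + |(m : ℝ) * ((q : ℝ) * α - cfp α (j + 1))| := hsplit ▸ abs_sub _ _
    _ = |(n : ℝ) * α - s| + m * cfErr α (j + 1) := by
      rw [abs_mul, abs_cfq_mul_sub_cfp hα, abs_of_nonneg (by exact_mod_cast hm : (0 : ℝ) ≤ m)]

theorem cfq_add_two_div_four_le (hα : Irrational α) (j : ℕ) {n : ℤ} (s : ℤ) (hn : 0 ≤ n)
    (hdvd : ¬ cfq α (j + 1) ∣ n) (h : |(n : ℝ) * α - s| ≤ 1 / (4 * cfq α (j + 1))) :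
    (cfq α (j + 2) : ℝ) / 4 ≤ n := by
  set q := cfq α (j + 1)
  set m := n / q
  have hqZ : 0 < q := one_le_cfq hα (j + 1)
  have hq : (0 : ℝ) < q := by exact_mod_cast hqZ
  have hmq : (m : ℝ) * q ≤ n := by exact_mod_cast Int.ediv_mul_le n hqZ.ne'
  have hε : |(n : ℝ) * α - s| * (4 * q) ≤ 1 := (le_div_iff₀ (by positivity)).mp h
  have hlow := one_lt_two_mul_cfq_succ_mul_cfErr hα j
  have hup := cfq_succ_mul_cfErr_lt_one hα (j + 1)
  have hsum := cfErr_le_abs_mul_sub_add hα j s hn hdvd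
  have hm : 1 < 4 * (m * q) * cfErr α (j + 1) := by nlinarith
  have hq₂ : (cfq α (j + 2) : ℝ) < 4 * (m * q) :=
    lt_of_mul_lt_mul_right (hup.trans hm) (cfErr_pos hα (j + 1)).le
  linarith

end ContinuedFraction

/-- Davie's lemma: if `‖nα‖ ≤ 1/(4 q_k)` (distance to the nearest integer), then
`n ≥ q_k`, and either `q_k` divides `n` or `n ≥ q_{k+1}/4`. -/
theorem stmt17 (α : ℝ) (hα : Irrational α) (k n : ℕ) (hn : 0 < n)
    (h : |(n : ℝ) * α - (round ((n : ℝ) * α) : ℤ)| ≤ 1 / (4 * (cfq α k : ℝ))) :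
    cfq α k ≤ (n : ℤ) ∧ (cfq α k ∣ (n : ℤ) ∨ (cfq α (k + 1) : ℝ) / 4 ≤ (n : ℝ)) := by
  cases k with
  | zero => exact ⟨show (1 : ℤ) ≤ n by omega, Or.inl (one_dvd _)⟩
  | succ j =>
    have hq : (0 : ℝ) < cfq α (j + 1) := by exact_mod_cast one_le_cfq hα (j + 1)
    have hsmall : |((n : ℤ) : ℝ) * α - round ((n : ℝ) * α)| < cfErr α j := by
      have := one_lt_two_mul_cfq_succ_mul_cfErr hα j
      have := (le_div_iff₀ (by positivity)).mp h
      push_cast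
      nlinarith [abs_nonneg ((n : ℝ) * α - round ((n : ℝ) * α))]
    refine ⟨cfq_succ_le_of_abs_mul_sub_lt hα j _ (by exact_mod_cast hn) hsmall, ?_⟩
    by_cases hdvd : cfq α (j + 1) ∣ (n : ℤ)
    · exact Or.inl hdvd
    · right
      simpa using cfq_add_two_div_four_le hα j _ (Int.natCast_nonneg n) hdvd (by simpa using h)
end

section
/- Every diophantine number is a Brjuno number: if there exist γ>0 and τ≥0 with |x − p/q| ≥ γ q^{−2−τ} for all rationals p/q, then B(x) = ∑_{n≥0} β_{n−1} log(1/x_n) < +∞. -/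
/-!
Write `bₙ = x₀ ⋯ xₙ₋₁`. The Gauss recursion gives `bₙ₊₂ = bₙ - aₙ bₙ₊₁` with `aₙ = ⌊1/xₙ⌋ ≥ 1`,
so `bₙ = |p - q x|` and `bₙ₊₁ = |p' - q' x|` for consecutive convergents `p/q`, `p'/q'`, with
`q' bₙ + q bₙ₊₁ = 1`. The diophantine condition then gives `bₙ₊₁ ≥ γ q'^{-1-τ} ≥ γ bₙ^{1+τ}`,
i.e. `xₙ ≥ γ bₙ^τ`, so the `n`-th term of `B(x)` is at most
`bₙ (|log γ| + τ log (1/bₙ)) ≤ (|log γ| + 2τ) √bₙ`. Since `xₙ xₙ₊₁ ≤ 1/2`, `bₙ` decays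
geometrically and the series converges.
-/

open Real Finset

theorem summable_of_add_two_le {a : ℕ → ℝ} {c : ℝ} (ha : ∀ n, 0 ≤ a n) (hc₀ : 0 ≤ c)
    (hc₁ : c < 1) (h : ∀ n, a (n + 2) ≤ c * a n) : Summable a := by
  have decay : ∀ n k, a (n + 2 * k) ≤ c ^ k * a n := by
    intro n k
    induction k with
    | zero => simp
    | succ k ih =>
      calc a (n + 2 * (k + 1)) = a (n + 2 * k + 2) := by ring_nf
        _ ≤ c * a (n + 2 * k) := h _
        _ ≤ c * (c ^ k * a n) := mul_le_mul_of_nonneg_left ih hc₀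
        _ = c ^ (k + 1) * a n := by ring
  have geom (n : ℕ) : Summable fun k => c ^ k * a n :=
    (summable_geometric_of_lt_one hc₀ hc₁).mul_right _
  refine Summable.even_add_odd ?_ ?_
  · refine (geom 0).of_nonneg_of_le (fun k => ha _) fun k => ?_
    simpa using decay 0 k
  · refine (geom 1).of_nonneg_of_le (fun k => ha _) fun k => ?_
    simpa [add_comm] using decay 1 k

theorem mul_log_one_div_le_two_mul_sqrt {t : ℝ} (ht : 0 ≤ t) : t * log (1 / t) ≤ 2 * √t := by
  rcases ht.eq_or_lt with rfl | ht
  · simp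
  have hlog : log (1 / t) ≤ 2 / √t := by
    calc log (1 / t) = 2 * log √(1 / t) := by rw [log_sqrt (by positivity)]; ring
      _ ≤ 2 * √(1 / t) := by gcongr; exact log_le_self (sqrt_nonneg _)
      _ = 2 / √t := by rw [sqrt_div' _ ht.le, sqrt_one]; ring
  calc t * log (1 / t) ≤ t * (2 / √t) := mul_le_mul_of_nonneg_left hlog ht.le
    _ = 2 * √t := by
      field_simp
      rw [sq_sqrt ht.le]

def DiophantineWith (x γ τ : ℝ) : Prop :=
  ∀ P Q : ℤ, 0 < Q → γ * (Q : ℝ) ^ (-(2 + τ)) ≤ |x - (P : ℝ) / (Q : ℝ)|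

theorem le_abs_sub_mul_of_diophantineWith {x γ τ : ℝ} (hdio : DiophantineWith x γ τ) (p q : ℤ)
    (hq : 0 < q) : γ * (q : ℝ) ^ (-(1 + τ)) ≤ |p - q * x| := by
  have hqR : (0 : ℝ) < q := by exact_mod_cast hq
  have hpow : (q : ℝ) ^ (-(1 + τ)) = q * (q : ℝ) ^ (-(2 + τ)) := by
    conv_rhs => enter [1]; rw [← rpow_one (q : ℝ)]
    rw [← rpow_add hqR]; ring_nf
  have habs : |(p : ℝ) - q * x| = q * |x - p / q| := by
    rw [abs_sub_comm, ← abs_of_pos hqR, ← abs_mul, abs_of_pos hqR]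
    congr 1; field_simp
  rw [hpow, habs, mul_left_comm]
  exact mul_le_mul_of_nonneg_left (hdio p q hq) hqR.le

section GaussMap

variable {x : ℝ}

theorem gIter_succ_eq_sub_floor (x : ℝ) (n : ℕ) :
    gIter x (n + 1) = 1 / gIter x n - ⌊1 / gIter x n⌋ :=
  (Int.self_sub_floor _).symm

theorem gIter_nonneg (x : ℝ) (n : ℕ) : 0 ≤ gIter x n := by
  cases n <;> exact Int.fract_nonneg _

theorem gIter_lt_one_s18 (x : ℝ) (n : ℕ) : gIter x n < 1 := by
  cases n <;> exact Int.fract_lt_one _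

theorem irrational_gIter_s18 (hx : Irrational x) (n : ℕ) : Irrational (gIter x n) := by
  induction n with
  | zero => simpa [gIter, ← Int.self_sub_floor] using hx.sub_intCast ⌊x⌋
  | succ n ih =>
    rw [gIter_succ_eq_sub_floor, one_div]
    exact ih.inv.sub_intCast _

theorem gIter_pos_s18 (hx : Irrational x) (n : ℕ) : 0 < gIter x n :=
  (gIter_nonneg x n).lt_of_ne (irrational_gIter_s18 hx n).ne_zero.symm

theorem one_le_floor_one_div_gIter (hx : Irrational x) (n : ℕ) : 1 ≤ ⌊1 / gIter x n⌋ :=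
  Int.le_floor.mpr <| by
    simpa using one_le_one_div (gIter_pos_s18 hx n) (gIter_lt_one_s18 x n).le

theorem gIter_mul_gIter_succ_le_half (hx : Irrational x) (n : ℕ) :
    gIter x n * gIter x (n + 1) ≤ 1 / 2 := by
  have h₀ := gIter_pos_s18 hx n
  have ha : (1 : ℝ) ≤ ⌊1 / gIter x n⌋ := by exact_mod_cast one_le_floor_one_div_gIter hx n
  have hle_one_sub : gIter x n * gIter x (n + 1) ≤ 1 - gIter x n := by
    calc gIter x n * gIter x (n + 1) ≤ gIter x n * (1 / gIter x n - 1) := by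
          rw [gIter_succ_eq_sub_floor]; gcongr
      _ = 1 - gIter x n := by field_simp
  have hle_self : gIter x n * gIter x (n + 1) ≤ gIter x n :=
    mul_le_of_le_one_right h₀.le (gIter_lt_one_s18 x (n + 1)).le
  rcases le_total (gIter x n) (1 / 2) with h | h <;> linarith

/-- `gaussProd x n = x₀ ⋯ xₙ₋₁` is the paper's `β_{n-1}`. -/
noncomputable def gaussProd (x : ℝ) (n : ℕ) : ℝ := ∏ i ∈ range n, gIter x i

theorem gaussProd_zero (x : ℝ) : gaussProd x 0 = 1 := prod_range_zero _

theorem gaussProd_succ (x : ℝ) (n : ℕ) : gaussProd x (n + 1) = gaussProd x n * gIter x n :=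
  prod_range_succ _ _

theorem gaussProd_nonneg (x : ℝ) (n : ℕ) : 0 ≤ gaussProd x n :=
  prod_nonneg fun i _ => gIter_nonneg x i

theorem gaussProd_le_one (x : ℝ) (n : ℕ) : gaussProd x n ≤ 1 :=
  prod_le_one (fun i _ => gIter_nonneg x i) fun i _ => (gIter_lt_one_s18 x i).le

theorem gaussProd_pos (hx : Irrational x) (n : ℕ) : 0 < gaussProd x n :=
  prod_pos fun i _ => gIter_pos_s18 hx i

theorem gaussProd_add_two (hx : Irrational x) (n : ℕ) :
    gaussProd x (n + 2) = gaussProd x n - ⌊1 / gIter x n⌋ * gaussProd x (n + 1) := by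
  have := (gIter_pos_s18 hx n).ne'
  rw [gaussProd_succ _ (n + 1), gaussProd_succ, gIter_succ_eq_sub_floor]
  field_simp

theorem gaussProd_add_two_le (hx : Irrational x) (n : ℕ) :
    gaussProd x (n + 2) ≤ 2⁻¹ * gaussProd x n := by
  rw [gaussProd_succ, gaussProd_succ, mul_assoc, mul_comm]
  exact mul_le_mul_of_nonneg_right (by simpa using gIter_mul_gIter_succ_le_half hx n)
    (gaussProd_nonneg x n)

theorem summable_sqrt_gaussProd (hx : Irrational x) : Summable fun n => √(gaussProd x n) := by
  refine summable_of_add_two_le (c := √2⁻¹) (fun n => sqrt_nonneg _) (sqrt_nonneg _) ?_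
    fun n => ?_
  · exact (sqrt_lt' one_pos).mpr (by norm_num)
  · rw [← sqrt_mul (by norm_num)]
    exact sqrt_le_sqrt (gaussProd_add_two_le hx n)

theorem exists_convergents (hx : Irrational x) (n : ℕ) :
    ∃ p q p' q' : ℤ, 0 ≤ q ∧ 0 < q' ∧
      gaussProd x n = (-1) ^ n * (p - q * x) ∧
      gaussProd x (n + 1) = (-1) ^ (n + 1) * (p' - q' * x) ∧
      q' * gaussProd x n + q * gaussProd x (n + 1) = 1 := by
  induction n with
  | zero =>
    refine ⟨1, 0, ⌊x⌋, 1, le_rfl, one_pos, ?_, ?_, ?_⟩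
    · simp [gaussProd_zero]
    · simp [gaussProd_succ, gaussProd_zero, gIter, ← Int.self_sub_floor]
    · simp [gaussProd_zero]
  | succ n ih =>
    obtain ⟨p, q, p', q', hq, hq', hβ, hβ', hdet⟩ := ih
    set a := ⌊1 / gIter x n⌋
    have ha : 1 ≤ a := one_le_floor_one_div_gIter hx n
    refine ⟨p', q', p + a * p', q + a * q', hq'.le, by nlinarith, hβ', ?_, ?_⟩
    · rw [gaussProd_add_two hx, hβ, hβ']; push_cast; ring
    · rw [gaussProd_add_two hx]; push_cast; linear_combination hdet

theorem mul_gaussProd_rpow_le_gaussProd_succ (hx : Irrational x) {γ τ : ℝ} (hγ : 0 ≤ γ)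
    (hτ : 0 ≤ τ) (hdio : DiophantineWith x γ τ) (n : ℕ) :
    γ * gaussProd x n ^ (1 + τ) ≤ gaussProd x (n + 1) := by
  obtain ⟨-, q, p', q', hq, hq', -, hβ', hdet⟩ := exists_convergents hx n
  have hq'R : (0 : ℝ) < q' := by exact_mod_cast hq'
  have hβ'_eq : gaussProd x (n + 1) = |p' - q' * x| := by
    rw [← abs_of_pos (gaussProd_pos hx (n + 1)), hβ', abs_mul, abs_pow, abs_neg, abs_one,
      one_pow, one_mul]
  have hβ_le : gaussProd x n ≤ (q' : ℝ)⁻¹ := by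
    rw [← one_div, le_div_iff₀ hq'R]
    have : (0 : ℝ) ≤ q * gaussProd x (n + 1) :=
      mul_nonneg (by exact_mod_cast hq) (gaussProd_nonneg x _)
    linarith
  calc γ * gaussProd x n ^ (1 + τ) ≤ γ * (q' : ℝ) ^ (-(1 + τ)) := by
        rw [rpow_neg hq'R.le, ← inv_rpow hq'R.le]
        gcongr
        exact gaussProd_nonneg x n
    _ ≤ gaussProd x (n + 1) := hβ'_eq ▸ le_abs_sub_mul_of_diophantineWith hdio p' q' hq'

theorem mul_gaussProd_rpow_le_gIter (hx : Irrational x) {γ τ : ℝ} (hγ : 0 ≤ γ) (hτ : 0 ≤ τ)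
    (hdio : DiophantineWith x γ τ) (n : ℕ) :
    γ * gaussProd x n ^ τ ≤ gIter x n := by
  have hβ := gaussProd_pos hx n
  have h := mul_gaussProd_rpow_le_gaussProd_succ hx hγ hτ hdio n
  rw [rpow_add hβ, rpow_one, gaussProd_succ] at h
  exact le_of_mul_le_mul_left (by linarith) hβ

theorem gaussProd_mul_log_le (hx : Irrational x) {γ τ : ℝ} (hγ : 0 < γ) (hτ : 0 ≤ τ)
    (hdio : DiophantineWith x γ τ) (n : ℕ) :
    gaussProd x n * log (1 / gIter x n) ≤ (|log γ| + 2 * τ) * √(gaussProd x n) := by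
  set β := gaussProd x n
  have hβ : 0 < β := gaussProd_pos hx n
  have hβ_le_sqrt : β ≤ √β := by
    rw [le_sqrt' hβ]
    nlinarith [gaussProd_le_one x n]
  have hlog : log (1 / gIter x n) ≤ -log γ + τ * log (1 / β) := by
    calc log (1 / gIter x n) ≤ log (1 / (γ * β ^ τ)) :=
          log_le_log (one_div_pos.mpr (gIter_pos_s18 hx n)) <| one_div_le_one_div_of_le
            (by positivity) (mul_gaussProd_rpow_le_gIter hx hγ.le hτ hdio n)
      _ = -log γ + τ * log (1 / β) := by
          rw [one_div, log_inv, log_mul hγ.ne' (rpow_pos_of_pos hβ τ).ne', log_rpow hβ,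
            one_div, log_inv]
          ring
  calc β * log (1 / gIter x n) ≤ β * (-log γ) + τ * (β * log (1 / β)) :=
        (mul_le_mul_of_nonneg_left hlog hβ.le).trans_eq (by ring)
    _ ≤ √β * |log γ| + τ * (2 * √β) := by
        gcongr ?_ + τ * ?_
        · exact (mul_le_mul_of_nonneg_left (neg_le_abs _) hβ.le).trans
            (mul_le_mul_of_nonneg_right hβ_le_sqrt (abs_nonneg _))
        · exact mul_log_one_div_le_two_mul_sqrt hβ.le
    _ = (|log γ| + 2 * τ) * √β := by ring

end GaussMap

/-- Every diophantine number is a Brjuno number: if `|x - P/Q| ≥ γ Q^{-2-τ}` for all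
rationals `P/Q`, then `B(x) < +∞`. -/
theorem stmt18 (x : ℝ) (hx : Irrational x) (γ τ : ℝ) (hγ : 0 < γ) (hτ : 0 ≤ τ)
    (hdio : ∀ P Q : ℤ, 0 < Q → γ * (Q : ℝ) ^ (-(2 + τ)) ≤ |x - (P : ℝ) / (Q : ℝ)|) :
    brjuno x ≠ ⊤ := by
  set bound : ℕ → ℝ := fun n => (|log γ| + 2 * τ) * √(gaussProd x n)
  have hbound_nonneg (n : ℕ) : 0 ≤ bound n := by positivity
  have hsummable : Summable bound := (summable_sqrt_gaussProd hx).mul_left _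
  have hle : brjuno x ≤ ∑' n, ENNReal.ofReal (bound n) :=
    ENNReal.tsum_le_tsum fun n =>
      ENNReal.ofReal_le_ofReal (gaussProd_mul_log_le hx hγ hτ hdio n)
  rw [← ENNReal.ofReal_tsum_of_nonneg hbound_nonneg hsummable] at hle
  exact ne_top_of_le_ne_top ENNReal.ofReal_ne_top hle
end
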